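/- arXiv:1001.0193 — 4 statements merged into one kernel-verified Lean document; each statement's English description precedes it below -/
import Mathlib

section
/- Let d, m be positive integers with d ≥ m and let h ≥ 2 be an integer. If the triple (d, h−1, 2m) is admissible, then the triple (d, h, m) is admissible. (Proof idea: first bisect the m given masses simultaneously with one hyperplane using the Ham Sandwich Theorem, which applies since d ≥ m; then cut the resulting 2m masses into equal parts using h−1 further hyperplanes.) -/
open MeasureTheory

/-- A *mass* in `ℝ^d`: a finite Borel measure for which every affine hyperplane
(zero set of an affine functional with nonzero linear part) is a null set. -/
def IsMass (d : ℕ) (μ : Measure (Fin d → ℝ)) : Prop :=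
  IsFiniteMeasure μ ∧
    ∀ f : (Fin d → ℝ) →ᵃ[ℝ] ℝ, f.linear ≠ 0 → μ {x | f x = 0} = 0

/-- The `h` hyperplanes determined by the nonzero affine functionals `f i`
cut the mass `μ` into `2^h` equal pieces: every orthant given by a sign
vector `ε ∈ {−1,+1}^h` (encoded by `Bool`) has measure `μ(ℝ^d)/2^h`. -/
def Cuts (d h : ℕ) (f : Fin h → ((Fin d → ℝ) →ᵃ[ℝ] ℝ))
    (μ : Measure (Fin d → ℝ)) : Prop :=
  ∀ ε : Fin h → Bool,
    μ {x | ∀ i, 0 ≤ (if ε i then f i x else -(f i x))} = μ Set.univ / 2 ^ h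

/-- `(d, h, m)` is admissible: any `m` masses in `ℝ^d` can be simultaneously cut
into `2^h` equal pieces by `h` affine hyperplanes. -/
def Admissible (d h m : ℕ) : Prop :=
  ∀ μ : Fin m → Measure (Fin d → ℝ), (∀ j, IsMass d (μ j)) →
    ∃ f : Fin h → ((Fin d → ℝ) →ᵃ[ℝ] ℝ),
      (∀ i, (f i).linear ≠ 0) ∧ ∀ j, Cuts d h f (μ j)

/-- `Δ(h, m)`: the smallest positive dimension `d` such that `(d, h, m)` is admissible. -/
noncomputable def Delta (h m : ℕ) : ℕ := sInf {d | 0 < d ∧ Admissible d h m}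

/- ### Auxiliary lemmas -/

lemma measSet_nonneg {d : ℕ} (g : (Fin d → ℝ) →ᵃ[ℝ] ℝ) (b : Bool) :
    MeasurableSet {x : Fin d → ℝ | 0 ≤ (if b then g x else -(g x))} := by
  have hg : Measurable fun x : Fin d → ℝ => g x := g.continuous_of_finiteDimensional.measurable
  cases b
  · exact measurableSet_le measurable_const hg.neg
  · exact measurableSet_le measurable_const hg

lemma measSet_orthant {d n : ℕ} (f : Fin n → ((Fin d → ℝ) →ᵃ[ℝ] ℝ)) (ε : Fin n → Bool) :
    MeasurableSet {x : Fin d → ℝ | ∀ i, 0 ≤ (if ε i then f i x else -(f i x))} := by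
  have h : {x : Fin d → ℝ | ∀ i, 0 ≤ (if ε i then f i x else -(f i x))}
      = ⋂ i, {x : Fin d → ℝ | 0 ≤ (if ε i then f i x else -(f i x))} := by
    ext x; simp
  rw [h]
  exact MeasurableSet.iInter fun i => measSet_nonneg (f i) (ε i)

lemma card_fix (n : ℕ) (b : Bool) :
    (Finset.univ.filter (fun ε : Fin (n+1) → Bool => ε 0 = b)).card = 2 ^ n := by
  have h := Finset.card_bij'
    (s := Finset.univ.filter fun ε : Fin (n+1) → Bool => ε 0 = b)
    (t := (Finset.univ : Finset (Fin n → Bool)))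
    (fun ε _ => ε ∘ Fin.succ) (fun g _ => Fin.cons b g)
    (fun _ _ => Finset.mem_univ _)
    (fun g _ => by simp)
    (fun ε hε => by
      funext i
      refine Fin.cases ?_ ?_ i
      · simpa using ((Finset.mem_filter.mp hε).2).symm
      · intro i; simp)
    (fun g _ => by funext i; simp)
  rw [h]
  simp

lemma div_pow2_succ (a : ENNReal) (n : ℕ) : a / 2 ^ (n + 1) = a / 2 / 2 ^ n := by
  rw [pow_succ']
  simp [div_eq_mul_inv, ENNReal.mul_inv, mul_assoc]

lemma half_eq_of_add {a b c : ENNReal} (hc : c ≠ ⊤) (hab : a + b = c)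
    (ha : a ≤ c / 2) (hb : b ≤ c / 2) : a = c / 2 ∧ b = c / 2 := by
  have hbt : b ≠ ⊤ := by
    intro hbt; rw [hbt] at hb
    exact (lt_irrefl ⊤ (lt_of_le_of_lt hb
      (ENNReal.div_lt_top hc (by norm_num)))).elim
  have hat : a ≠ ⊤ := by
    intro hat; rw [hat] at ha
    exact (lt_irrefl ⊤ (lt_of_le_of_lt ha
      (ENNReal.div_lt_top hc (by norm_num)))).elim
  have ha' : c / 2 ≤ a :=
    calc c / 2 = c - c / 2 := (ENNReal.sub_half hc).symm
      _ ≤ c - b := tsub_le_tsub_left hb c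
      _ = a := by rw [← hab]; exact ENNReal.add_sub_cancel_right hbt
  have hb' : c / 2 ≤ b :=
    calc c / 2 = c - c / 2 := (ENNReal.sub_half hc).symm
      _ ≤ c - a := tsub_le_tsub_left ha c
      _ = b := by rw [← hab]; exact ENNReal.add_sub_cancel_left hat
  exact ⟨le_antisymm ha ha', le_antisymm hb hb'⟩

/-- From a full cut by `n+1` hyperplanes, the first hyperplane bisects the mass. -/
lemma cuts_halfspace {d n : ℕ} {f : Fin (n+1) → ((Fin d → ℝ) →ᵃ[ℝ] ℝ)}
    {μ : Measure (Fin d → ℝ)} (hfin : IsFiniteMeasure μ)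
    (h0 : μ {x | f 0 x = 0} = 0) (hc : Cuts d (n+1) f μ) (b : Bool) :
    μ {x | 0 ≤ (if b then f 0 x else -(f 0 x))} = μ Set.univ / 2 := by
  haveI := hfin
  have key : ∀ b' : Bool, μ {x | 0 ≤ (if b' then f 0 x else -(f 0 x))} ≤ μ Set.univ / 2 := by
    intro b'
    have hsub : {x : Fin d → ℝ | 0 ≤ (if b' then f 0 x else -(f 0 x))} ⊆
        ⋃ ε ∈ Finset.univ.filter (fun ε : Fin (n+1) → Bool => ε 0 = b'),
          {x : Fin d → ℝ | ∀ i, 0 ≤ (if ε i then f i x else -(f i x))} := by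
      intro x hx
      have hmem : (fun i => if i = 0 then b' else decide (0 ≤ f i x)) ∈
          Finset.univ.filter (fun ε : Fin (n+1) → Bool => ε 0 = b') := by simp
      refine Set.mem_iUnion₂.mpr ⟨_, hmem, ?_⟩
      · intro i
        by_cases hi : i = 0
        · subst hi; simpa using hx
        · simp only [hi, if_false]
          by_cases h : 0 ≤ f i x
          · simp [h]
          · push_neg at h
            simp [not_le.mpr h]
            linarith
    calc μ {x | 0 ≤ (if b' then f 0 x else -(f 0 x))}
        ≤ ∑ ε ∈ Finset.univ.filter (fun ε : Fin (n+1) → Bool => ε 0 = b'),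
            μ {x : Fin d → ℝ | ∀ i, 0 ≤ (if ε i then f i x else -(f i x))} :=
          (measure_mono hsub).trans (measure_biUnion_finset_le _ _)
      _ = 2 ^ n * (μ Set.univ / 2 ^ (n + 1)) := by
          rw [Finset.sum_congr rfl (fun ε _ => hc ε), Finset.sum_const, card_fix n b']
          simp [nsmul_eq_mul]
      _ = μ Set.univ / 2 := by
          rw [div_pow2_succ]
          exact ENNReal.mul_div_cancel (by positivity) (by simp)
  have hu : {x : Fin d → ℝ | 0 ≤ f 0 x} ∪ {x | 0 ≤ -(f 0 x)} = Set.univ := by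
    ext x
    simp only [Set.mem_union, Set.mem_setOf_eq, Set.mem_univ, iff_true]
    rcases le_total 0 (f 0 x) with h | h
    · exact Or.inl h
    · exact Or.inr (by linarith)
  have hi : μ ({x : Fin d → ℝ | 0 ≤ f 0 x} ∩ {x | 0 ≤ -(f 0 x)}) = 0 := by
    refine measure_mono_null ?_ h0
    rintro x ⟨h1, h2⟩
    simp only [Set.mem_setOf_eq] at h1 h2 ⊢
    linarith
  have hAB : μ {x : Fin d → ℝ | 0 ≤ f 0 x} + μ {x | 0 ≤ -(f 0 x)} = μ Set.univ := by
    have h := measure_union_add_inter (μ := μ) (t := {x : Fin d → ℝ | 0 ≤ -(f 0 x)})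
      {x : Fin d → ℝ | 0 ≤ f 0 x} (by simpa using measSet_nonneg (f 0) false)
    rw [hu, hi, add_zero] at h
    exact h.symm
  have hkeyA := key true
  have hkeyB := key false
  simp only [if_true, if_false] at hkeyA hkeyB
  have hres := half_eq_of_add (measure_ne_top μ _) hAB hkeyA hkeyB
  cases b
  · simpa using hres.2
  · simpa using hres.1

lemma isMass_restrict {d : ℕ} {μ : Measure (Fin d → ℝ)} (h : IsMass d μ)
    (s : Set (Fin d → ℝ)) : IsMass d (μ.restrict s) := by
  haveI := h.1
  refine ⟨inferInstance, fun f hf => ?_⟩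
  have hle : μ.restrict s {x | f x = 0} ≤ μ {x | f x = 0} :=
    Measure.restrict_le_self _
  exact le_antisymm (hle.trans_eq (h.2 f hf)) (zero_le)

/-- for `d ≥ m` and `h ≥ 2`, if `(d, h−1, 2m)` is admissible
then so is `(d, h, m)`. -/
theorem admissible_of_admissible_pred_double (d h m : ℕ) (hd : 0 < d) (hm : 0 < m)
    (hdm : m ≤ d) (hh : 2 ≤ h)
    (H : Admissible d (h - 1) (2 * m)) : Admissible d h m := by
  obtain ⟨k, rfl⟩ : ∃ k, h = k + 2 := ⟨h - 2, by omega⟩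
  have hH : Admissible d (k + 1) (2 * m) := by
    simpa using H
  intro μ hμ
  -- First application: duplicate the masses to find a bisecting hyperplane.
  obtain ⟨f₁, hf₁lin, hf₁⟩ := hH (fun kk => μ ⟨(kk : ℕ) % m, Nat.mod_lt _ hm⟩)
    (fun kk => hμ _)
  set g := f₁ 0 with hg
  have hbis : ∀ (j : Fin m) (b : Bool),
      μ j {x | 0 ≤ (if b then g x else -(g x))} = μ j Set.univ / 2 := by
    intro j b
    have hj : (⟨(j : ℕ) % m, Nat.mod_lt _ hm⟩ : Fin m) = j :=
      Fin.ext (Nat.mod_eq_of_lt j.isLt)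
    have hcut : Cuts d (k + 1) f₁ (μ j) := by
      have h := hf₁ ⟨(j : ℕ), by omega⟩
      simpa [hj] using h
    exact cuts_halfspace (hμ j).1 ((hμ j).2 g (hf₁lin 0)) hcut b
  -- Second application: cut the 2m restricted masses.
  set T : Bool → Set (Fin d → ℝ) := fun b => {x | 0 ≤ (if b then g x else -(g x))} with hT
  set ν : Fin (2 * m) → Measure (Fin d → ℝ) := fun kk =>
    if hkk : (kk : ℕ) < m then (μ ⟨(kk : ℕ), hkk⟩).restrict (T true)
    else (μ ⟨(kk : ℕ) - m, by omega⟩).restrict (T false) with hν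
  have hνmass : ∀ kk, IsMass d (ν kk) := by
    intro kk
    by_cases hkk : (kk : ℕ) < m
    · simp only [hν, hkk, dif_pos]
      exact isMass_restrict (hμ _) _
    · simp only [hν, hkk, dif_neg, not_false_iff]
      exact isMass_restrict (hμ _) _
  obtain ⟨f₂, hf₂lin, hf₂⟩ := hH ν hνmass
  set F : Fin (k + 2) → ((Fin d → ℝ) →ᵃ[ℝ] ℝ) := Fin.cons g f₂ with hF
  have hF0 : F 0 = g := rfl
  have hFs : ∀ i : Fin (k + 1), F i.succ = f₂ i := fun i => rfl
  refine ⟨F, ?_, ?_⟩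
  · intro i
    refine Fin.cases ?_ ?_ i
    · rw [hF0]; exact hf₁lin 0
    · intro i; rw [hFs]; exact hf₂lin i
  · intro j ε
    have hν_eq : (μ j).restrict (T (ε 0)) =
        ν (if ε 0 then ⟨(j : ℕ), by omega⟩ else ⟨(j : ℕ) + m, by omega⟩) := by
      cases hε : ε 0
      · have h1 : ¬ ((j : ℕ) + m < m) := by omega
        simp [hν, h1]
      · simp [hν, j.isLt]
    have hO : MeasurableSet
        {x : Fin d → ℝ | ∀ i : Fin (k + 1), 0 ≤ (if ε i.succ then f₂ i x else -(f₂ i x))} :=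
      measSet_orthant f₂ (fun i => ε i.succ)
    have hsplit : {x : Fin d → ℝ | ∀ i : Fin (k + 2),
          0 ≤ (if ε i then F i x else -(F i x))}
        = {x : Fin d → ℝ | ∀ i : Fin (k + 1),
            0 ≤ (if ε i.succ then f₂ i x else -(f₂ i x))} ∩ T (ε 0) := by
      ext x
      simp only [Set.mem_setOf_eq, Set.mem_inter_iff, Fin.forall_fin_succ,
        hF0, hFs, hT]
      tauto
    have hcut := hf₂ (if ε 0 then ⟨(j : ℕ), by omega⟩ else ⟨(j : ℕ) + m, by omega⟩)
      (fun i => ε i.succ)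
    show μ j {x : Fin d → ℝ | ∀ i : Fin (k + 2),
        0 ≤ (if ε i then F i x else -(F i x))}
      = μ j Set.univ / 2 ^ (k + 2)
    rw [hsplit, ← Measure.restrict_apply hO, hν_eq, hcut, ← hν_eq,
      Measure.restrict_apply_univ]
    have hTb : μ j (T (ε 0)) = μ j Set.univ / 2 := hbis j (ε 0)
    rw [hTb, ← div_pow2_succ]
end

section
/- Let h ≥ 2 and m ≥ 1 be integers, and suppose there exists a positive integer d such that the triple (d, h−1, 2m) is admissible. Then Δ(h, m) ≤ Δ(h−1, 2m), i.e. the smallest dimension in which h hyperplanes can equipartition any m masses is at most the smallest dimension in which h−1 hyperplanes can equipartition any 2m masses. -/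
open MeasureTheory
open scoped ENNReal

lemma ennreal_div_div (a b c : ℝ≥0∞) (hb : b ≠ 0) (hb' : b ≠ ⊤) :
    a / b / c = a / (b * c) := by
  rw [div_eq_mul_inv, div_eq_mul_inv, div_eq_mul_inv,
    ENNReal.mul_inv (Or.inl hb) (Or.inl hb'), mul_assoc]

lemma pow_mul_div_half (u : ℝ≥0∞) (k : ℕ) : (2:ℝ≥0∞)^k * (u / 2^(k+1)) = u / 2 := by
  rw [pow_succ, ← mul_div_assoc]
  exact ENNReal.mul_div_mul_left u 2 (by simp) (by simp)

lemma card_filter_apply_zero (k : ℕ) (b : Bool) :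
    (Finset.univ.filter fun ε : Fin (k+1) → Bool => ε 0 = b).card = 2 ^ k := by
  have h2 : (Finset.univ : Finset (Fin k → Bool)).card = 2 ^ k := by
    simp [Finset.card_univ]
  rw [← h2]
  apply Finset.card_bij' (i := fun ε _ => ε ∘ Fin.succ) (j := fun σ _ => Fin.cons b σ)
  · intro ε hε
    simp
  · intro σ hσ
    simp [Fin.cons_zero]
  · intro ε hε
    simp only [Finset.mem_filter] at hε
    funext i
    refine Fin.cases ?_ ?_ i
    · simp [hε.2]
    · intro i'; simp
  · intro σ hσ
    funext i
    simp

lemma bisect {d k : ℕ} (g : Fin (k+1) → ((Fin d → ℝ) →ᵃ[ℝ] ℝ))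
    (μ : Measure (Fin d → ℝ)) [IsFiniteMeasure μ] (hc : Cuts d (k+1) g μ) :
    μ {x | 0 ≤ g 0 x} = μ Set.univ / 2 ∧ μ {x | g 0 x ≤ 0} = μ Set.univ / 2 := by
  set u := μ Set.univ with hu_def
  have hu : u ≠ ⊤ := measure_ne_top μ _
  set O : (Fin (k+1) → Bool) → Set (Fin d → ℝ) :=
    fun ε => {x | ∀ i, 0 ≤ (if ε i then g i x else -(g i x))} with hO_def
  have hO : ∀ ε, μ (O ε) = u / 2^(k+1) := hc
  -- key upper bound
  have key : ∀ b : Bool, μ {x | 0 ≤ (if b then g 0 x else -(g 0 x))} ≤ u / 2 := by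
    intro b
    set S := Finset.univ.filter fun ε : Fin (k+1) → Bool => ε 0 = b with hS
    have hsub : {x | 0 ≤ (if b then g 0 x else -(g 0 x))} ⊆ ⋃ ε ∈ S, O ε := by
      intro x hx
      simp only [Set.mem_setOf_eq] at hx
      set e : Fin (k+1) → Bool := fun i => if i = 0 then b else decide (0 ≤ g i x) with he
      have h1 : e ∈ S := by simp [hS, he]
      have h2 : x ∈ O e := by
        intro i
        by_cases hi : i = 0
        · subst hi; simpa [he] using hx
        · simp only [he, if_neg hi]
          by_cases h0 : (0:ℝ) ≤ g i x <;> simp [h0]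
          linarith
      exact Set.mem_biUnion h1 h2
    calc μ {x | 0 ≤ (if b then g 0 x else -(g 0 x))} ≤ μ (⋃ ε ∈ S, O ε) := measure_mono hsub
      _ ≤ ∑ ε ∈ S, μ (O ε) := measure_biUnion_finset_le S O
      _ = ∑ ε ∈ S, u / 2^(k+1) := Finset.sum_congr rfl (fun ε _ => hO ε)
      _ = S.card • (u / 2^(k+1)) := Finset.sum_const _
      _ = (2^k : ℝ≥0∞) * (u / 2^(k+1)) := by
          rw [hS, card_filter_apply_zero, nsmul_eq_mul]; push_cast; ring_nf
      _ = u / 2 := pow_mul_div_half u k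
  have hA : μ {x | 0 ≤ g 0 x} ≤ u / 2 := by simpa using key true
  have hB : μ {x | g 0 x ≤ 0} ≤ u / 2 := by
    have := key false
    simpa [neg_nonneg] using this
  have hcover : u ≤ μ {x | 0 ≤ g 0 x} + μ {x | g 0 x ≤ 0} := by
    have : (Set.univ : Set (Fin d → ℝ)) ⊆ {x | 0 ≤ g 0 x} ∪ {x | g 0 x ≤ 0} := by
      intro x _
      rcases le_total 0 (g 0 x) with h | h
      · exact Or.inl h
      · exact Or.inr h
    calc u = μ Set.univ := rfl
      _ ≤ μ ({x | 0 ≤ g 0 x} ∪ {x | g 0 x ≤ 0}) := measure_mono this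
      _ ≤ _ := measure_union_le _ _
  have half_le : ∀ {a b : ℝ≥0∞}, a ≤ u/2 → b ≤ u/2 → u ≤ a + b → a = u/2 := by
    intro a b ha hb hab
    refine le_antisymm ha ?_
    have h1 : u ≤ a + u/2 := le_trans hab (add_le_add (le_refl a) hb)
    have := tsub_le_iff_right.mpr h1
    rwa [ENNReal.sub_half hu] at this
  refine ⟨half_le hA hB hcover, half_le hB hA ?_⟩
  rwa [add_comm] at hcover

lemma meas_halfspace {d : ℕ} (c : (Fin d → ℝ) →ᵃ[ℝ] ℝ) (b : Bool) :
    MeasurableSet {x : Fin d → ℝ | 0 ≤ (if b then c x else -(c x))} := by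
  have hc : Continuous c := c.continuous_of_finiteDimensional
  cases b
  · have : {x : Fin d → ℝ | 0 ≤ (if (false : Bool) then c x else -(c x))} = c ⁻¹' Set.Iic 0 := by
      ext x; simp [neg_nonneg]
    rw [this]
    exact (isClosed_Iic.preimage hc).measurableSet
  · have : {x : Fin d → ℝ | 0 ≤ (if (true : Bool) then c x else -(c x))} = c ⁻¹' Set.Ici 0 := by
      ext x; simp
    rw [this]
    exact (isClosed_Ici.preimage hc).measurableSet

lemma step {d k m : ℕ} (hm : 0 < m) (ha : Admissible d (k+1) (2*m)) :
    Admissible d (k+1+1) m := by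
  intro μ hμ
  haveI : ∀ j, IsFiniteMeasure (μ j) := fun j => (hμ j).1
  -- index helpers
  have hlt : ∀ j : Fin (2*m), j.val % m < m := fun j => Nat.mod_lt _ hm
  set π : Fin (2*m) → Fin m := fun j => ⟨j.val % m, hlt j⟩ with hπ
  -- first application: duplicated masses, to obtain a common bisecting hyperplane
  obtain ⟨g, hg0, hgC⟩ := ha (fun j => μ (π j)) (fun j => hμ (π j))
  set c := g 0 with hc_def
  set A := {x : Fin d → ℝ | 0 ≤ c x} with hA_def
  set B := {x : Fin d → ℝ | c x ≤ 0} with hB_def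
  have hAmeas : MeasurableSet A := by
    have := meas_halfspace c true; simpa [hA_def] using this
  have hBmeas : MeasurableSet B := by
    have := meas_halfspace c false; simpa [hB_def, neg_nonneg] using this
  -- every μ j is bisected by c
  have hbis : ∀ j : Fin m, μ j A = μ j Set.univ / 2 ∧ μ j B = μ j Set.univ / 2 := by
    intro j
    have hidx : π ⟨j.val, by omega⟩ = j := by
      apply Fin.ext; simp [hπ, Nat.mod_eq_of_lt j.isLt]
    have := bisect g (μ j) (by rw [← hidx]; exact hgC _)
    exact this
  -- second application: restricted masses
  set ν : Fin (2*m) → Measure (Fin d → ℝ) :=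
    fun j => (μ (π j)).restrict (if j.val < m then A else B) with hν
  have hνmass : ∀ j, IsMass d (ν j) := by
    intro j
    constructor
    · infer_instance
    · intro f hf
      have hmeas : MeasurableSet {x : Fin d → ℝ | f x = 0} := by
        have hc : Continuous f := f.continuous_of_finiteDimensional
        have : {x : Fin d → ℝ | f x = 0} = f ⁻¹' {0} := rfl
        rw [this]; exact (isClosed_singleton.preimage hc).measurableSet
      have := Measure.restrict_apply (μ := μ (π j))
        (s := if j.val < m then A else B) hmeas
      refine le_antisymm ?_ zero_le
      calc ν j {x | f x = 0} = μ (π j) ({x | f x = 0} ∩ _) := this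
        _ ≤ μ (π j) {x | f x = 0} := measure_mono Set.inter_subset_left
        _ = 0 := (hμ (π j)).2 f hf
  obtain ⟨f', hf'0, hf'C⟩ := ha ν hνmass
  -- assemble the k+2 hyperplanes
  refine ⟨Fin.cons c f', ?_, ?_⟩
  · intro i
    refine Fin.cases ?_ ?_ i
    · simpa using hg0 0
    · intro i'; simpa using hf'0 i'
  · intro j ε
    set ε' : Fin (k+1) → Bool := fun i => ε i.succ with hε'
    set O' := {x : Fin d → ℝ | ∀ i, 0 ≤ (if ε' i then f' i x else -(f' i x))} with hO'
    have hO'meas : MeasurableSet O' := by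
      have : O' = ⋂ i, {x : Fin d → ℝ | 0 ≤ (if ε' i then f' i x else -(f' i x))} := by
        ext x; simp [hO']
      rw [this]
      exact MeasurableSet.iInter fun i => meas_halfspace (f' i) (ε' i)
    set C := (if ε 0 then A else B) with hC
    have hset : {x | ∀ i, 0 ≤ (if ε i then (Fin.cons c f' : Fin (k+1+1) → _) i x
        else -((Fin.cons c f' : Fin (k+1+1) → _) i x))} = O' ∩ C := by
      ext x
      simp only [Set.mem_setOf_eq, Set.mem_inter_iff, hO', hC]
      constructor
      · intro hx
        refine ⟨fun i => by simpa [hε', Fin.cons_succ] using hx i.succ, ?_⟩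
        have h0 := hx 0
        rw [Fin.cons_zero] at h0
        cases hb : ε 0
        · simp only [hb, if_neg (by simp : ¬ (false = true))] at h0 ⊢
          simp only [hA_def, hB_def, Set.mem_setOf_eq]
          linarith
        · simp only [hb, if_pos rfl] at h0 ⊢
          simpa [hA_def] using h0
      · rintro ⟨h1, h0⟩ i
        refine Fin.cases ?_ ?_ i
        · rw [Fin.cons_zero]
          cases hb : ε 0
          · simp only [hb, if_neg (by simp : ¬ (false = true))]
            simp only [hb, if_neg (by simp : ¬ (false = true)), hB_def,
              Set.mem_setOf_eq] at h0
            linarith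
          · simp only [hb, if_pos rfl]
            simp only [hb, if_pos rfl, hA_def, Set.mem_setOf_eq] at h0
            exact h0
        · intro i'
          rw [Fin.cons_succ]
          simpa [hε'] using h1 i'
    rw [hset]
    -- the right index into ν
    have hidx1 : (π ⟨j.val, by omega⟩ : Fin m) = j := by
      apply Fin.ext; simp [hπ, Nat.mod_eq_of_lt j.isLt]
    have hidx2 : (π ⟨j.val + m, by omega⟩ : Fin m) = j := by
      apply Fin.ext; simp [hπ, Nat.add_mod_right, Nat.mod_eq_of_lt j.isLt]
    have huniv : (μ j).restrict C Set.univ = μ j Set.univ / 2 := by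
      rw [Measure.restrict_apply_univ]
      cases hb : ε 0
      · simp only [hC, hb, if_neg (by simp : ¬ (false = true))]
        exact (hbis j).2
      · simp only [hC, hb, if_pos rfl]
        exact (hbis j).1
    have main : ∀ jj : Fin (2*m), ν jj = (μ j).restrict C →
        μ j (O' ∩ C) = μ j Set.univ / 2 ^ (k+1+1) := by
      intro jj hjj
      have hCuts := hf'C jj ε'
      rw [hjj] at hCuts
      calc μ j (O' ∩ C) = (μ j).restrict C O' := (Measure.restrict_apply hO'meas).symm
        _ = (μ j).restrict C Set.univ / 2 ^ (k+1) := hCuts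
        _ = μ j Set.univ / 2 / 2 ^ (k+1) := by rw [huniv]
        _ = μ j Set.univ / 2 ^ (k+1+1) := by
            rw [ennreal_div_div _ _ _ (by simp) (by simp), ← pow_succ']
    cases hb : ε 0
    · refine main ⟨j.val + m, by omega⟩ ?_
      have h1 : ν ⟨j.val + m, by omega⟩
          = (μ (π ⟨j.val + m, by omega⟩)).restrict (if j.val + m < m then A else B) := rfl
      rw [h1, hidx2, if_neg (by omega)]
      congr 1
      simp [hC, hb]
    · refine main ⟨j.val, by omega⟩ ?_
      have h1 : ν ⟨j.val, by omega⟩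
          = (μ (π ⟨j.val, by omega⟩)).restrict (if j.val < m then A else B) := rfl
      rw [h1, hidx1, if_pos j.isLt]
      congr 1
      simp [hC, hb]


/-- for `h ≥ 2`, `m ≥ 1`, if `(d, h−1, 2m)` is admissible for some
positive `d`, then `Δ(h, m) ≤ Δ(h−1, 2m)`. -/
theorem delta_le_delta_pred_double (h m : ℕ) (hh : 2 ≤ h) (hm : 1 ≤ m)
    (H : ∃ d : ℕ, 0 < d ∧ Admissible d (h - 1) (2 * m)) :
    Delta h m ≤ Delta (h - 1) (2 * m) := by
  obtain ⟨d₀, hd₀, had₀⟩ := H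
  have hne : {d | 0 < d ∧ Admissible d (h-1) (2*m)}.Nonempty := ⟨d₀, hd₀, had₀⟩
  have hmem : 0 < Delta (h-1) (2*m) ∧ Admissible (Delta (h-1) (2*m)) (h-1) (2*m) :=
    Nat.sInf_mem hne
  obtain ⟨k, hk⟩ : ∃ k, h - 1 = k + 1 := ⟨h-2, by omega⟩
  set D := Delta (h-1) (2*m) with hD
  clear_value D
  have hadm : Admissible D (k+1+1) m := step hm (hk ▸ hmem.2)
  have hh2 : h = k + 1 + 1 := by omega
  have : Admissible D h m := by rw [hh2]; exact hadm
  exact Nat.sInf_le ⟨hmem.1, this⟩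
end

section
/- Let h, m ≥ 1 be integers, and suppose there exists a positive integer d such that the triple (d, h, m+1) is admissible. Then Δ(h, m) ≤ Δ(h, m+1) − 1, i.e. the smallest dimension in which h hyperplanes can equipartition any m masses is strictly smaller than the smallest dimension in which h hyperplanes can equipartition any m+1 masses. -/
open MeasureTheory

open Set
open scoped ENNReal

namespace DeltaAux

lemma affine_cont {n : ℕ} (f : (Fin n → ℝ) →ᵃ[ℝ] ℝ) : Continuous f :=
  f.continuous_of_finiteDimensional

lemma orthant_measurable {n h : ℕ} (f : Fin h → ((Fin n → ℝ) →ᵃ[ℝ] ℝ)) (ε : Fin h → Bool) :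
    MeasurableSet {x | ∀ i, 0 ≤ (if ε i then f i x else -(f i x))} := by
  have : {x : Fin n → ℝ | ∀ i, 0 ≤ (if ε i then f i x else -(f i x))}
      = ⋂ i, {x | 0 ≤ (if ε i then f i x else -(f i x))} := by ext x; simp
  rw [this]
  refine MeasurableSet.iInter fun i => ?_
  by_cases hb : ε i <;> simp only [hb, if_true, if_false]
  · exact measurableSet_le measurable_const (affine_cont (f i)).measurable
  · exact measurableSet_le measurable_const (affine_cont (f i)).measurable.neg

lemma card_filter_eqb {h : ℕ} (i : Fin h) (b : Bool) :
    (Finset.univ.filter (fun ε : Fin h → Bool => ε i = b)).card = 2 ^ (h - 1) := by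
  classical
  have e : {ε : Fin h → Bool // ε i = b} ≃ ({j : Fin h // j ≠ i} → Bool) :=
    { toFun := fun ε j => ε.1 j.1
      invFun := fun g => ⟨fun j => if hj : j = i then b else g ⟨j, hj⟩, by simp⟩
      left_inv := by
        rintro ⟨ε, hε⟩
        ext j
        by_cases hj : j = i
        · subst hj; simp [hε]
        · simp [hj]
      right_inv := by
        intro g
        funext j
        simp [j.2] }
  have h1 : (Finset.univ.filter (fun ε : Fin h → Bool => ε i = b)).card
      = Fintype.card {ε : Fin h → Bool // ε i = b} := (Fintype.card_subtype _).symm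
  rw [h1, Fintype.card_congr e, Fintype.card_fun]
  have : Fintype.card {j : Fin h // j ≠ i} = h - 1 := by
    have := Fintype.card_subtype_compl (fun j : Fin h => j = i)
    simpa [Fintype.card_subtype_eq] using this
  simp [this]

/-- from the full cut condition, each single hyperplane bisects the measure -/
lemma cuts_halfspace {n h : ℕ} (hh : 1 ≤ h) (f : Fin h → ((Fin n → ℝ) →ᵃ[ℝ] ℝ))
    (μ : Measure (Fin n → ℝ)) [IsFiniteMeasure μ] (hc : Cuts n h f μ) (i : Fin h) :
    μ {x | 0 ≤ f i x} = μ Set.univ / 2 ∧ μ {x | f i x ≤ 0} = μ Set.univ / 2 := by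
  classical
  set V := μ Set.univ with hV
  have hVfin : V ≠ ⊤ := measure_ne_top μ _
  have hpow : (2 : ℝ≥0∞) ^ h = 2 ^ (h - 1) * 2 := by
    rw [← pow_succ]; congr 1; omega
  have ha0 : (2 : ℝ≥0∞) ^ (h - 1) ≠ 0 := by positivity
  have haT : (2 : ℝ≥0∞) ^ (h - 1) ≠ ⊤ := ENNReal.pow_ne_top (by norm_num)
  have key : (2 : ℝ≥0∞) ^ (h - 1) * (V / 2 ^ h) = V / 2 := by
    have h1 : V / 2 ^ h = (2 ^ (h - 1) : ℝ≥0∞)⁻¹ * (V / 2) := by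
      rw [hpow, div_eq_mul_inv, div_eq_mul_inv,
        ENNReal.mul_inv (Or.inl ha0) (Or.inl haT)]
      ring
    rw [h1, ← mul_assoc, ENNReal.mul_inv_cancel ha0 haT, one_mul]
  have main : ∀ b : Bool, μ {x | 0 ≤ (if b then f i x else -(f i x))} ≤ V / 2 := by
    intro b
    set F := Finset.univ.filter (fun ε : Fin h → Bool => ε i = b) with hF
    have hsub : {x | 0 ≤ (if b then f i x else -(f i x))}
        ⊆ ⋃ ε ∈ F, {x | ∀ k, 0 ≤ (if ε k then f k x else -(f k x))} := by
      intro x hx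
      refine Set.mem_biUnion (x := Function.update (fun k => decide (0 ≤ f k x)) i b)
        (Finset.mem_coe.mpr (Finset.mem_filter.mpr
          ⟨Finset.mem_univ _, by simp⟩)) ?_
      intro k
      by_cases hk : k = i
      · subst hk; simpa [Function.update_self] using hx
      · rw [Function.update_of_ne hk]
        by_cases h0 : 0 ≤ f k x
        · simp [h0]
        · simp only [decide_eq_false h0, if_false, Bool.false_eq_true]
          push_neg at h0

          linarith
    calc μ {x | 0 ≤ (if b then f i x else -(f i x))}
        ≤ ∑ ε ∈ F, μ {x | ∀ k, 0 ≤ (if ε k then f k x else -(f k x))} :=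
          (measure_mono hsub).trans (measure_biUnion_finset_le F _)
      _ = ∑ _ε ∈ F, V / 2 ^ h := Finset.sum_congr rfl fun ε _ => hc ε
      _ = F.card • (V / 2 ^ h) := Finset.sum_const _
      _ = (2 : ℝ≥0∞) ^ (h - 1) * (V / 2 ^ h) := by
          rw [hF, card_filter_eqb i b, nsmul_eq_mul]; push_cast; ring_nf
      _ = V / 2 := key
  have hA : μ {x | 0 ≤ f i x} ≤ V / 2 := by simpa using main true
  have hB : μ {x | f i x ≤ 0} ≤ V / 2 := by
    have := main false
    simpa [neg_nonneg] using this
  have hcover : (Set.univ : Set (Fin n → ℝ)) ⊆ {x | 0 ≤ f i x} ∪ {x | f i x ≤ 0} := by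
    intro x _
    rcases le_total 0 (f i x) with h' | h'
    · exact Or.inl h'
    · exact Or.inr h'
  have hsum : V ≤ μ {x | 0 ≤ f i x} + μ {x | f i x ≤ 0} :=
    (measure_mono hcover).trans (measure_union_le _ _)
  have half : V - V / 2 = V / 2 := ENNReal.sub_half hVfin
  constructor
  · refine le_antisymm hA ?_
    rw [← half]
    exact tsub_le_iff_right.mpr (hsum.trans (add_le_add le_rfl hB))
  · refine le_antisymm hB ?_
    rw [← half]
    have : V ≤ μ {x | f i x ≤ 0} + μ {x | 0 ≤ f i x} := by
      rw [add_comm]; exact hsum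
    exact tsub_le_iff_right.mpr (this.trans (add_le_add le_rfl hA))

lemma affine_exists_ne {n : ℕ} (f : (Fin n → ℝ) →ᵃ[ℝ] ℝ) (hf : f.linear ≠ 0) :
    ∃ x, f x ≠ 0 := by
  obtain ⟨v, hv⟩ : ∃ v, f.linear v ≠ 0 := by
    by_contra hall
    push_neg at hall
    exact hf (LinearMap.ext hall)
  by_cases h0 : f 0 = 0
  · refine ⟨v, ?_⟩
    have : f v = f.linear v + f 0 := by
      have := f.map_vadd (0 : Fin n → ℝ) v
      simpa [vadd_eq_add] using this
    rw [this, h0, add_zero]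
    exact hv
  · exact ⟨0, h0⟩

lemma affine_null {n : ℕ} (f : (Fin n → ℝ) →ᵃ[ℝ] ℝ) (hf : f.linear ≠ 0) :
    volume {x : Fin n → ℝ | f x = 0} = 0 := by
  set s : AffineSubspace ℝ (Fin n → ℝ) := AffineSubspace.comap f (AffineSubspace.mk' (0:ℝ) ⊥)
    with hs
  have hcoe : (s : Set (Fin n → ℝ)) = {x | f x = 0} := by
    ext x
    simp [hs, AffineSubspace.mem_comap, AffineSubspace.mem_mk']
  have hne : s ≠ ⊤ := by
    obtain ⟨x, hx⟩ := affine_exists_ne f hf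
    intro htop
    have : x ∈ (s : Set (Fin n → ℝ)) := by rw [htop]; trivial
    rw [hcoe] at this
    exact hx this
  rw [← hcoe]
  exact Measure.addHaar_affineSubspace volume s hne

/-- the reference mass: Lebesgue restricted to the unit ball -/
noncomputable def ballM (n : ℕ) : Measure (Fin n → ℝ) := volume.restrict (Metric.ball 0 1)

instance (n : ℕ) : IsFiniteMeasure (ballM n) := by
  constructor
  rw [ballM, Measure.restrict_apply_univ]
  exact measure_ball_lt_top

lemma ballM_mass (n : ℕ) : IsMass n (ballM n) := by
  refine ⟨inferInstance, fun f hf => ?_⟩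
  exact measure_mono_null (by rfl) <|
    le_antisymm ((Measure.restrict_le_self _).trans_eq (affine_null f hf)) zero_le

lemma ballM_univ_pos (n : ℕ) : 0 < ballM n Set.univ := by
  rw [ballM, Measure.restrict_apply_univ]
  exact Metric.isOpen_ball.measure_pos volume ⟨0, Metric.mem_ball_self one_pos⟩

/-- a hyperplane bisecting the ball measure (in both closed halves) passes through the center -/
lemma bisect_center_core {n : ℕ} (g : (Fin n → ℝ) →ᵃ[ℝ] ℝ)
    (h1 : ballM n {x | 0 ≤ g x} = ballM n Set.univ / 2)
    (h2 : ballM n {x | g x ≤ 0} = ballM n Set.univ / 2)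
    (hc : 0 < g 0) : False := by
  set c := g 0 with hcdef
  set V := ballM n Set.univ with hV
  have hVfin : V ≠ ⊤ := measure_ne_top _ _
  have gd : ∀ x, g x = g.linear x + c := by
    intro x
    have := g.map_vadd (0 : Fin n → ℝ) x
    simpa [vadd_eq_add] using this
  have mX : MeasurableSet {x : Fin n → ℝ | 0 ≤ g x} :=
    measurableSet_le measurable_const (affine_cont g).measurable
  have mY : MeasurableSet {x : Fin n → ℝ | 2*c ≤ g x} :=
    measurableSet_le measurable_const (affine_cont g).measurable
  have mZ : MeasurableSet {x : Fin n → ℝ | g x ≤ 0} :=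
    measurableSet_le (affine_cont g).measurable measurable_const
  -- reflection: μ Y = μ {g ≤ 0}
  have hrefl : ballM n {x | 2*c ≤ g x} = ballM n {x | g x ≤ 0} := by
    rw [ballM, Measure.restrict_apply mY, Measure.restrict_apply mZ]
    have hneg : -({x : Fin n → ℝ | 2*c ≤ g x} ∩ Metric.ball 0 1)
        = {x : Fin n → ℝ | g x ≤ 0} ∩ Metric.ball 0 1 := by
      ext x
      have hgx : g (-x) = 2*c - g x := by
        rw [gd (-x), gd x, map_neg]; ring
      simp only [Set.mem_neg, Set.mem_inter_iff, Set.mem_setOf_eq, mem_ball_zero_iff,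
        norm_neg, hgx]
      constructor
      · rintro ⟨hle, hb⟩; exact ⟨by linarith, hb⟩
      · rintro ⟨hle, hb⟩; exact ⟨by linarith, hb⟩
    calc volume ({x : Fin n → ℝ | 2*c ≤ g x} ∩ Metric.ball 0 1)
        = volume (-({x : Fin n → ℝ | 2*c ≤ g x} ∩ Metric.ball 0 1)) :=
          (Measure.measure_neg volume _).symm
      _ = volume ({x : Fin n → ℝ | g x ≤ 0} ∩ Metric.ball 0 1) := by rw [hneg]
  have hYX : {x : Fin n → ℝ | 2*c ≤ g x} ⊆ {x | 0 ≤ g x} := by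
    intro x hx; simp only [Set.mem_setOf_eq] at *; linarith
  have hdiff : ballM n ({x : Fin n → ℝ | 0 ≤ g x} \ {x | 2*c ≤ g x}) = 0 := by
    rw [measure_diff hYX mY.nullMeasurableSet (measure_ne_top _ _), h1, hrefl, h2, tsub_self]
  -- the open slab has positive measure
  set S := {x : Fin n → ℝ | 0 < g x ∧ g x < 2*c} with hS
  have hSopen : IsOpen S :=
    (isOpen_lt continuous_const (affine_cont g)).inter (isOpen_lt (affine_cont g) continuous_const)
  have hSmem : (0 : Fin n → ℝ) ∈ S ∩ Metric.ball 0 1 := by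
    refine ⟨⟨hc, by rw [← hcdef]; linarith⟩, Metric.mem_ball_self one_pos⟩
  have hSpos : 0 < ballM n S := by
    rw [ballM, Measure.restrict_apply hSopen.measurableSet]
    exact (hSopen.inter Metric.isOpen_ball).measure_pos volume ⟨0, hSmem⟩
  have hsub : S ⊆ {x : Fin n → ℝ | 0 ≤ g x} \ {x | 2*c ≤ g x} := by
    rintro x ⟨h0, h2c⟩
    exact ⟨le_of_lt h0, by simp only [Set.mem_setOf_eq]; linarith⟩
  exact absurd (le_antisymm ((measure_mono hsub).trans_eq hdiff) zero_le) (ne_of_gt hSpos)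

lemma bisect_center {n : ℕ} (g : (Fin n → ℝ) →ᵃ[ℝ] ℝ)
    (h1 : ballM n {x | 0 ≤ g x} = ballM n Set.univ / 2)
    (h2 : ballM n {x | g x ≤ 0} = ballM n Set.univ / 2) : g 0 = 0 := by
  rcases lt_trichotomy (g 0) 0 with hlt | heq | hgt
  · exfalso
    refine bisect_center_core (-g) ?_ ?_ ?_
    · have : {x : Fin n → ℝ | 0 ≤ (-g) x} = {x | g x ≤ 0} := by
        ext x; simp [AffineMap.coe_neg, neg_nonneg]
      rw [this]; exact h2
    · have : {x : Fin n → ℝ | (-g) x ≤ 0} = {x | 0 ≤ g x} := by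
        ext x; simp [AffineMap.coe_neg, neg_nonpos]
      rw [this]; exact h1
    · simp [AffineMap.coe_neg]; linarith
  · exact heq
  · exact absurd (bisect_center_core g h1 h2 hgt) id

/-- linear embedding `x ↦ (x, 0)` -/
noncomputable def J (k : ℕ) : (Fin k → ℝ) →ₗ[ℝ] (Fin (k+1) → ℝ) where
  toFun := fun x => Fin.snoc x 0
  map_add' := by
    intro x y; funext i
    refine Fin.lastCases ?_ ?_ i <;> simp
  map_smul' := by
    intro c x; funext i
    refine Fin.lastCases ?_ ?_ i <;> simp

/-- affine embedding `x ↦ (x, 1)` -/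
noncomputable def Aff (k : ℕ) : (Fin k → ℝ) →ᵃ[ℝ] (Fin (k+1) → ℝ) where
  toFun := fun x => Fin.snoc x 1
  linear := J k
  map_vadd' := by
    intro p v; funext i
    refine Fin.lastCases ?_ ?_ i <;> simp [J]

lemma Aff_apply {k : ℕ} (x : Fin k → ℝ) : Aff k x = Fin.snoc x 1 := rfl

lemma Aff_linear {k : ℕ} : (Aff k).linear = J k := rfl

lemma snoc_decomp {k : ℕ} (x : Fin k → ℝ) (t : ℝ) :
    (Fin.snoc x t : Fin (k+1) → ℝ)
      = (Fin.snoc x 0 : Fin (k+1) → ℝ) + t • (Pi.single (Fin.last k) 1 : Fin (k+1) → ℝ) := by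
  funext i
  refine Fin.lastCases ?_ ?_ i
  · simp
  · intro j
    have hne : (Fin.castSucc j) ≠ Fin.last k := (Fin.castSucc_lt_last j).ne
    simp [Pi.single_eq_of_ne hne]

/-- the cone map `(x, s) ↦ s • (x, 1)` -/
noncomputable def T (k : ℕ) : (Fin k → ℝ) × ℝ → (Fin (k+1) → ℝ) :=
  fun p => p.2 • (Fin.snoc p.1 1 : Fin (k+1) → ℝ)

lemma contT (k : ℕ) : Continuous (T k) := by
  apply Continuous.smul continuous_snd
  apply continuous_pi
  intro i
  refine Fin.lastCases ?_ ?_ i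
  · simp only [Fin.snoc_last]; exact continuous_const
  · intro j
    simp only [Fin.snoc_castSucc]
    exact (continuous_apply j).comp continuous_fst

lemma fT {k : ℕ} (f : (Fin (k+1) → ℝ) →ᵃ[ℝ] ℝ) (x : Fin k → ℝ) (s : ℝ) :
    f (T k (x, s)) = s * ((f.comp (Aff k)) x - f 0) + f 0 := by
  have h2 : (f.comp (Aff k)) x = f.linear (Fin.snoc x 1) + f 0 := by
    have h : (f.comp (Aff k)) x = f (Fin.snoc x 1) := rfl
    rw [h, f.decomp]; simp
  have h3 : f (s • (Fin.snoc x 1 : Fin (k+1) → ℝ))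
      = s * f.linear (Fin.snoc x 1) + f 0 := by
    rw [f.decomp]; simp [smul_eq_mul]
  have h1 : T k (x, s) = s • (Fin.snoc x 1 : Fin (k+1) → ℝ) := rfl
  rw [h1, h3, h2]; ring

/-- if the downstairs linear part vanishes, the functional only sees the last coordinate -/
lemma lin_last {k : ℕ} (L : (Fin (k+1) → ℝ) →ₗ[ℝ] ℝ) (hJ : ∀ x, L (Fin.snoc x 0) = 0)
    (y : Fin (k+1) → ℝ) : L y = y (Fin.last k) * L (Pi.single (Fin.last k) 1) := by
  have h0 : y = Fin.snoc (Fin.init y) (y (Fin.last k)) := (Fin.snoc_init_self y).symm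
  calc L y = L (Fin.snoc (Fin.init y) (y (Fin.last k))) := by rw [← h0]
    _ = y (Fin.last k) * L (Pi.single (Fin.last k) 1) := by
        rw [snoc_decomp, map_add, hJ, _root_.map_smul, zero_add, smul_eq_mul]

/-- key nullity: the "chart trace" of a nonzero functional is null for a downstairs mass -/
lemma mass_null_chart {k : ℕ} (μ : Measure (Fin k → ℝ)) (hμ : IsMass k μ)
    (f : (Fin (k+1) → ℝ) →ᵃ[ℝ] ℝ) (hf : f.linear ≠ 0) :
    μ {x | (f.comp (Aff k)) x - f 0 = 0} = 0 := by
  set g : (Fin k → ℝ) →ᵃ[ℝ] ℝ :=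
    f.comp (Aff k) + AffineMap.const ℝ (Fin k → ℝ) (-(f 0)) with hg
  have hgval : ∀ x, g x = (f.comp (Aff k)) x - f 0 := by
    intro x; simp [hg, sub_eq_add_neg]
  have hglin : g.linear = f.linear.comp (J k) := by
    refine LinearMap.ext fun x => ?_
    show (f.comp (Aff k)).linear x + (AffineMap.const ℝ (Fin k → ℝ) (-f 0)).linear x
        = f.linear ((J k) x)
    simp [AffineMap.comp, Aff_linear]
  by_cases hJ0 : g.linear = 0
  · -- then g is a nonzero constant, so the set is empty
    have hJ' : ∀ x, f.linear (Fin.snoc x 0) = 0 := by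
      intro x
      have := congrFun (congrArg (fun (L : _ →ₗ[ℝ] ℝ) => (L : (Fin k → ℝ) → ℝ)) (hglin ▸ hJ0 : f.linear.comp (J k) = 0)) x
      simpa [J] using this
    have hbL : f.linear (Pi.single (Fin.last k) 1) ≠ 0 := by
      intro hb
      apply hf
      refine LinearMap.ext fun y => ?_
      rw [lin_last f.linear hJ' y, hb, mul_zero]
      simp
    have hempty : {x : Fin k → ℝ | (f.comp (Aff k)) x - f 0 = 0} = ∅ := by
      ext x
      simp only [Set.mem_setOf_eq, Set.mem_empty_iff_false, iff_false]
      intro hx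
      apply hbL
      have h1 : (f.comp (Aff k)) x = f.linear (Fin.snoc x 1) + f 0 := by
        have h : (f.comp (Aff k)) x = f (Fin.snoc x 1) := rfl
        rw [h, f.decomp]; simp
      rw [h1] at hx
      have h2 : f.linear (Fin.snoc x 1) = 0 := by linarith
      rw [lin_last f.linear hJ' (Fin.snoc x 1)] at h2
      simpa using h2
    rw [hempty]; exact measure_empty
  · have := hμ.2 g hJ0
    have hset : {x : Fin k → ℝ | g x = 0} = {x | (f.comp (Aff k)) x - f 0 = 0} := by
      ext x; rw [Set.mem_setOf_eq, Set.mem_setOf_eq, hgval]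
    rw [← hset]
    exact this


lemma chart_linear {k : ℕ} (f : (Fin (k+1) → ℝ) →ᵃ[ℝ] ℝ) :
    (f.comp (Aff k)).linear = f.linear.comp (J k) := rfl

lemma J_apply {k : ℕ} (x : Fin k → ℝ) : J k x = Fin.snoc x 0 := rfl

lemma degenerate_rep {k : ℕ} (f : (Fin (k+1) → ℝ) →ᵃ[ℝ] ℝ) (hf : f.linear ≠ 0)
    (h0 : (f.comp (Aff k)).linear = 0) :
    ∃ b : ℝ, b ≠ 0 ∧ ∀ y, f.linear y = y (Fin.last k) * b := by
  have hJ' : ∀ x, f.linear (Fin.snoc x 0) = 0 := by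
    intro x
    have h1 : (f.comp (Aff k)).linear x = f.linear (Fin.snoc x 0) := by
      rw [chart_linear]
      simp [LinearMap.comp_apply, J_apply]
    rw [h0] at h1
    simpa using h1.symm
  refine ⟨f.linear (Pi.single (Fin.last k) 1), ?_, lin_last f.linear hJ'⟩
  intro hb
  apply hf
  refine LinearMap.ext fun y => ?_
  rw [lin_last f.linear hJ' y, hb, mul_zero]
  simp

-- new part
noncomputable def lam : Measure ℝ := volume.restrict (Ioo (1:ℝ) 2)

instance : IsFiniteMeasure lam := by
  constructor
  rw [lam, Measure.restrict_apply_univ, Real.volume_Ioo]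
  exact ENNReal.ofReal_lt_top

lemma lam_univ : lam Set.univ = 1 := by
  rw [lam, Measure.restrict_apply_univ, Real.volume_Ioo]
  norm_num

lemma lam_singleton (t : ℝ) : lam {t} = 0 :=
  le_antisymm ((Measure.restrict_le_self _).trans_eq (Real.volume_singleton)) zero_le

noncomputable def liftM {k : ℕ} (μ : Measure (Fin k → ℝ)) : Measure (Fin (k+1) → ℝ) :=
  Measure.map (T k) (μ.prod lam)

lemma liftM_apply {k : ℕ} (μ : Measure (Fin k → ℝ)) [SFinite μ]
    {s : Set (Fin (k+1) → ℝ)} (hs : MeasurableSet s) :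
    liftM μ s = (μ.prod lam) (T k ⁻¹' s) := by
  rw [liftM, Measure.map_apply (contT k).measurable hs]

lemma liftM_univ {k : ℕ} (μ : Measure (Fin k → ℝ)) [SFinite μ] :
    liftM μ Set.univ = μ Set.univ := by
  rw [liftM_apply μ MeasurableSet.univ, Set.preimage_univ, ← Set.univ_prod_univ,
    Measure.prod_prod, lam_univ, mul_one]

lemma liftM_mass {k : ℕ} (μ : Measure (Fin k → ℝ)) (hμ : IsMass k μ) :
    IsMass (k+1) (liftM μ) := by
  haveI := hμ.1
  constructor
  · constructor
    rw [liftM_univ]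
    exact measure_lt_top μ _
  · intro f hf
    have hms : MeasurableSet {y : Fin (k+1) → ℝ | f y = 0} :=
      measurableSet_eq_fun (affine_cont f).measurable measurable_const
    rw [liftM_apply μ hms]
    have hmN : MeasurableSet (T k ⁻¹' {y : Fin (k+1) → ℝ | f y = 0}) :=
      (contT k).measurable hms
    rw [Measure.prod_apply hmN]
    have hDm : MeasurableSet {x : Fin k → ℝ | (f.comp (Aff k)) x - f 0 = 0} :=
      measurableSet_eq_fun ((affine_cont (f.comp (Aff k))).sub continuous_const).measurable
        measurable_const
    have hbound : ∀ x : Fin k → ℝ,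
        lam (Prod.mk x ⁻¹' (T k ⁻¹' {y | f y = 0}))
          ≤ ({x | (f.comp (Aff k)) x - f 0 = 0}).indicator (fun _ => (1:ℝ≥0∞)) x := by
      intro x
      by_cases hx : (f.comp (Aff k)) x - f 0 = 0
      · rw [Set.indicator_of_mem (show x ∈ {x : Fin k → ℝ | (f.comp (Aff k)) x - f 0 = 0} from hx)]
        exact (measure_mono (Set.subset_univ _)).trans (le_of_eq lam_univ)
      · rw [Set.indicator_of_notMem (show x ∉ {x : Fin k → ℝ | (f.comp (Aff k)) x - f 0 = 0} from hx)]
        refine le_of_eq (measure_mono_null ?_ (lam_singleton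
          ((-(f 0)) / ((f.comp (Aff k)) x - f 0))))
        intro s hs
        simp only [Set.mem_preimage, Set.mem_setOf_eq] at hs
        rw [fT] at hs
        simp only [Set.mem_singleton_iff]
        rw [eq_div_iff hx]
        linarith
    refine le_antisymm ?_ zero_le
    calc ∫⁻ x, lam (Prod.mk x ⁻¹' (T k ⁻¹' {y | f y = 0})) ∂μ
        ≤ ∫⁻ x, ({x | (f.comp (Aff k)) x - f 0 = 0}).indicator (fun _ => (1:ℝ≥0∞)) x ∂μ :=
          lintegral_mono hbound
      _ = 1 * μ {x | (f.comp (Aff k)) x - f 0 = 0} := lintegral_indicator_const hDm 1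
      _ = 0 := by rw [one_mul, mass_null_chart μ hμ f hf]

-- new material starts here
lemma liftM_orthant {k h : ℕ} (μ : Measure (Fin k → ℝ)) [IsFiniteMeasure μ]
    (f : Fin h → ((Fin (k+1) → ℝ) →ᵃ[ℝ] ℝ)) (hf0 : ∀ i, f i 0 = 0) (ε : Fin h → Bool) :
    liftM μ {y | ∀ i, 0 ≤ (if ε i then f i y else -(f i y))}
      = μ {x | ∀ i, 0 ≤ (if ε i then (f i).comp (Aff k) x else -((f i).comp (Aff k)) x)} := by
  rw [liftM_apply μ (orthant_measurable f ε)]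
  have hprod : (μ.prod lam : Measure ((Fin k → ℝ) × ℝ))
      = (μ.prod volume).restrict (Set.univ ×ˢ Ioo (1:ℝ) 2) := by
    have h := Measure.prod_restrict (μ := μ) (ν := volume) Set.univ (Ioo (1:ℝ) 2)
    rw [Measure.restrict_univ] at h
    rw [lam, h]
  have hmeas : MeasurableSet (T k ⁻¹' {y | ∀ i, 0 ≤ (if ε i then f i y else -(f i y))}) :=
    (contT k).measurable (orthant_measurable f ε)
  rw [hprod, Measure.restrict_apply hmeas]
  have hset : (T k ⁻¹' {y | ∀ i, 0 ≤ (if ε i then f i y else -(f i y))})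
        ∩ (Set.univ ×ˢ Ioo (1:ℝ) 2)
      = {x | ∀ i, 0 ≤ (if ε i then (f i).comp (Aff k) x else -((f i).comp (Aff k)) x)}
        ×ˢ Ioo (1:ℝ) 2 := by
    ext ⟨x, s⟩
    simp only [Set.mem_inter_iff, Set.mem_preimage, Set.mem_setOf_eq, Set.mem_prod,
      Set.mem_univ, true_and, Set.mem_Ioo]
    have hfi : ∀ i, f i (T k (x, s)) = s * ((f i).comp (Aff k)) x := by
      intro i
      rw [fT, hf0 i]; ring
    constructor
    · rintro ⟨hall, hs1, hs2⟩
      have hs0 : (0:ℝ) < s := by linarith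
      refine ⟨fun i => ?_, hs1, hs2⟩
      have hi := hall i
      rw [hfi i] at hi
      rcases Bool.eq_false_or_eq_true (ε i) with hb | hb <;>
        simp only [hb, if_true, Bool.false_eq_true, if_false] at hi ⊢ <;> nlinarith
    · rintro ⟨hall, hs1, hs2⟩
      have hs0 : (0:ℝ) < s := by linarith
      refine ⟨fun i => ?_, hs1, hs2⟩
      have hi := hall i
      rw [hfi i]
      rcases Bool.eq_false_or_eq_true (ε i) with hb | hb <;>
        simp only [hb, if_true, Bool.false_eq_true, if_false] at hi ⊢ <;> nlinarith
  rw [hset, Measure.prod_prod, Real.volume_Ioo]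
  norm_num

lemma lam_Iic : lam (Iic (0:ℝ)) = 0 := by
  rw [lam, Measure.restrict_apply measurableSet_Iic]
  have : Iic (0:ℝ) ∩ Ioo 1 2 = ∅ := by
    ext r
    simp only [Set.mem_inter_iff, Set.mem_Iic, Set.mem_Ioo, Set.mem_empty_iff_false, iff_false]
    rintro ⟨h1, h2, _⟩; linarith
  rw [this, measure_empty]

/-- main reduction step: admissible in dim `k+1` for `m+1` masses implies
admissible in dim `k` for `m` masses -/
lemma step (h m k : ℕ) (hh : 1 ≤ h) (hk : 1 ≤ k) (HA : Admissible (k+1) h (m+1)) :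
    Admissible k h m := by
  intro μ hμ
  by_cases hz : ∀ j, μ j Set.univ = 0
  · -- all masses vanish: any hyperplane family works
    set p : (Fin k → ℝ) →ᵃ[ℝ] ℝ :=
      ((LinearMap.proj (⟨0, hk⟩ : Fin k) : ((Fin k → ℝ) →ₗ[ℝ] ℝ))).toAffineMap with hp
    refine ⟨fun _ => p, fun i => ?_, fun j ε => ?_⟩
    · intro h0
      have h1 : p.linear (Pi.single (⟨0, hk⟩ : Fin k) 1) = 1 := by
        simp [hp]
      rw [h0] at h1
      simp at h1
    · have hL : μ j {x | ∀ i, 0 ≤ (if ε i then p x else -(p x))} = 0 :=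
        le_antisymm ((measure_mono (Set.subset_univ _)).trans_eq (hz j)) zero_le
      rw [hL, hz j, ENNReal.zero_div]
  · push_neg at hz
    obtain ⟨j₀, hj₀⟩ := hz
    classical
    set ν : Fin (m+1) → Measure (Fin (k+1) → ℝ) :=
      Fin.snoc (fun j : Fin m => liftM (μ j)) (ballM (k+1)) with hν
    have hνmass : ∀ j, IsMass (k+1) (ν j) := by
      intro j
      refine Fin.lastCases ?_ ?_ j
      · rw [hν]; simp only [Fin.snoc_last]; exact ballM_mass (k+1)
      · intro j'
        rw [hν]; simp only [Fin.snoc_castSucc]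
        exact liftM_mass _ (hμ j')
    obtain ⟨f, hflin, hfcut⟩ := HA ν hνmass
    have hcutβ : Cuts (k+1) h f (ballM (k+1)) := by
      have hc := hfcut (Fin.last m)
      rw [hν] at hc
      simpa only [Fin.snoc_last] using hc
    have hf0 : ∀ i, f i 0 = 0 := fun i =>
      bisect_center (f i) (cuts_halfspace hh f _ hcutβ i).1 (cuts_halfspace hh f _ hcutβ i).2
    have hcutlift : ∀ j : Fin m, Cuts (k+1) h f (liftM (μ j)) := by
      intro j
      have hc := hfcut (Fin.castSucc j)
      rw [hν] at hc
      simpa only [Fin.snoc_castSucc] using hc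
    have hglin : ∀ i, ((f i).comp (Aff k)).linear ≠ 0 := by
      intro i h0
      obtain ⟨b, hb, hrep⟩ := degenerate_rep (f i) (hflin i) h0
      haveI := (hμ j₀).1
      -- the value of f i on the cone only depends on the sign of s
      have hval : ∀ (x : Fin k → ℝ) (s : ℝ), f i (T k (x, s)) = s * b := by
        intro x s
        have h1 : f i (T k (x, s)) = (f i).linear (T k (x, s)) + f i 0 := by
          rw [(f i).decomp]; simp
        rw [h1, hf0 i, add_zero, hrep]
        have h2 : T k (x, s) (Fin.last k) = s := by
          simp [T, Fin.snoc_last]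
        rw [h2]
      set ε : Fin h → Bool := fun _ => decide (b < 0) with hε
      have hcut0 := hcutlift j₀ ε
      have hzero : liftM (μ j₀) {y | ∀ i', 0 ≤ (if ε i' then f i' y else -(f i' y))} = 0 := by
        refine le_antisymm ?_ zero_le
        have hsub1 : {y : Fin (k+1) → ℝ | ∀ i', 0 ≤ (if ε i' then f i' y else -(f i' y))}
            ⊆ {y | 0 ≤ (if ε i then f i y else -(f i y))} := fun y hy => hy i
        calc liftM (μ j₀) {y | ∀ i', 0 ≤ (if ε i' then f i' y else -(f i' y))}
            ≤ liftM (μ j₀) {y | 0 ≤ (if ε i then f i y else -(f i y))} := by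
              refine measure_mono hsub1
          _ = (μ j₀).prod lam (T k ⁻¹' {y | 0 ≤ (if ε i then f i y else -(f i y))}) := by
              refine liftM_apply _ ?_
              by_cases hb' : ε i <;> simp only [hb', if_true, if_false]
              · exact measurableSet_le measurable_const (affine_cont (f i)).measurable
              · exact measurableSet_le measurable_const (affine_cont (f i)).measurable.neg
          _ ≤ (μ j₀).prod lam (Set.univ ×ˢ Iic (0:ℝ)) := by
              refine measure_mono ?_
              rintro ⟨x, s⟩ hxs
              simp only [Set.mem_preimage, Set.mem_setOf_eq, hval] at hxs
              simp only [Set.mem_prod, Set.mem_univ, true_and, Set.mem_Iic]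
              rcases hb.lt_or_gt with hbneg | hbpos
              · rw [hε] at hxs
                simp only [decide_eq_true_eq, if_pos hbneg] at hxs
                nlinarith
              · rw [hε] at hxs
                have : ¬ (b < 0) := by linarith
                simp only [this, decide_false, if_false, Bool.false_eq_true] at hxs
                nlinarith
          _ = μ j₀ Set.univ * lam (Iic 0) := Measure.prod_prod _ _
          _ = 0 := by rw [lam_Iic, mul_zero]
      rw [hzero, liftM_univ] at hcut0
      have : μ j₀ Set.univ = 0 ∨ ((2:ℝ≥0∞) ^ h) = ⊤ := by
        have := hcut0.symm
        rwa [ENNReal.div_eq_zero_iff] at this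
      rcases this with h' | h'
      · exact hj₀ h'
      · exact absurd h' (ENNReal.pow_ne_top (by norm_num))
    refine ⟨fun i => (f i).comp (Aff k), hglin, fun j ε => ?_⟩
    haveI := (hμ j).1
    have hc := hcutlift j ε
    rw [liftM_orthant (μ j) f hf0 ε, liftM_univ] at hc
    exact hc

/-! dimension one is impossible for two (or more) masses -/

noncomputable def emb1 : ℝ → (Fin 1 → ℝ) := fun r _ => r

lemma cont_emb1 : Continuous emb1 := continuous_pi fun _ => continuous_id

noncomputable def M1 (c : ℝ) : Measure (Fin 1 → ℝ) :=
  Measure.map emb1 (volume.restrict (Ioo c (c+1)))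

lemma f_emb1 (f : (Fin 1 → ℝ) →ᵃ[ℝ] ℝ) (r : ℝ) :
    f (emb1 r) = r * f.linear (fun _ => 1) + f 0 := by
  have h1 : emb1 r = r • (fun _ => (1:ℝ)) := by funext i; simp [emb1]
  rw [h1, f.decomp]
  simp [smul_eq_mul]

lemma a_ne (f : (Fin 1 → ℝ) →ᵃ[ℝ] ℝ) (hf : f.linear ≠ 0) :
    f.linear (fun _ => (1:ℝ)) ≠ 0 := by
  intro h0
  apply hf
  refine LinearMap.ext fun v => ?_
  have hv : v = v 0 • (fun _ => (1:ℝ)) := by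
    funext i
    have : i = 0 := Subsingleton.elim i 0
    rw [this]; simp
  rw [hv, _root_.map_smul, h0, smul_zero]
  simp

lemma M1_apply (c : ℝ) {s : Set (Fin 1 → ℝ)} (hs : MeasurableSet s) :
    M1 c s = volume (emb1 ⁻¹' s ∩ Ioo c (c+1)) := by
  rw [M1, Measure.map_apply cont_emb1.measurable hs,
    Measure.restrict_apply (cont_emb1.measurable hs)]

lemma M1_univ (c : ℝ) : M1 c Set.univ = 1 := by
  rw [M1_apply c MeasurableSet.univ]
  simp [Real.volume_Ioo]

instance (c : ℝ) : IsFiniteMeasure (M1 c) := by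
  constructor
  rw [M1_univ]
  exact ENNReal.one_lt_top

lemma M1_mass (c : ℝ) : IsMass 1 (M1 c) := by
  refine ⟨inferInstance, fun f hf => ?_⟩
  have hms : MeasurableSet {x : Fin 1 → ℝ | f x = 0} :=
    measurableSet_eq_fun (affine_cont f).measurable measurable_const
  rw [M1_apply c hms]
  set a := f.linear (fun _ => (1:ℝ)) with ha
  have hsub : emb1 ⁻¹' {x : Fin 1 → ℝ | f x = 0} ∩ Ioo c (c+1)
      ⊆ {(-(f 0)) / a} := by
    rintro r ⟨hr, _⟩
    simp only [Set.mem_preimage, Set.mem_setOf_eq, f_emb1] at hr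
    simp only [Set.mem_singleton_iff]
    rw [eq_div_iff (a_ne f hf)]
    linarith
  exact measure_mono_null hsub (Real.volume_singleton)

lemma interval_Ici (c t : ℝ) (hv : volume (Ioo c (c+1) ∩ Ici t) = 1/2) :
    c < t ∧ t < c + 1 := by
  rcases le_or_gt t c with h1 | h1
  · exfalso
    have : Ioo c (c+1) ∩ Ici t = Ioo c (c+1) :=
      Set.inter_eq_self_of_subset_left fun r hr => le_trans h1 (le_of_lt hr.1)
    rw [this] at hv
    rw [Real.volume_Ioo] at hv
    norm_num at hv
    rw [show (2:ℝ≥0∞)⁻¹ = 1/2 by rw [one_div]] at hv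
    exact absurd hv.symm (ne_of_lt (ENNReal.half_lt_self one_ne_zero ENNReal.one_ne_top))
  · rcases lt_or_ge t (c+1) with h2 | h2
    · exact ⟨h1, h2⟩
    · exfalso
      have : Ioo c (c+1) ∩ Ici t = ∅ := by
        ext r
        simp only [Set.mem_inter_iff, Set.mem_Ioo, Set.mem_Ici, Set.mem_empty_iff_false, iff_false]
        rintro ⟨⟨_, hr2⟩, hr3⟩
        linarith
      rw [this, measure_empty] at hv
      have : (0:ℝ≥0∞) < 1/2 := ENNReal.half_pos one_ne_zero
      rw [← hv] at this
      exact lt_irrefl _ this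

lemma interval_Iic (c t : ℝ) (hv : volume (Ioo c (c+1) ∩ Iic t) = 1/2) :
    c < t ∧ t < c + 1 := by
  rcases le_or_gt (c+1) t with h1 | h1
  · exfalso
    have : Ioo c (c+1) ∩ Iic t = Ioo c (c+1) :=
      Set.inter_eq_self_of_subset_left fun r hr => le_trans (le_of_lt hr.2) h1
    rw [this, Real.volume_Ioo] at hv
    norm_num at hv
    rw [show (2:ℝ≥0∞)⁻¹ = 1/2 by rw [one_div]] at hv
    exact absurd hv.symm (ne_of_lt (ENNReal.half_lt_self one_ne_zero ENNReal.one_ne_top))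
  · rcases lt_or_ge c t with h2 | h2
    · exact ⟨h2, h1⟩
    · exfalso
      have : Ioo c (c+1) ∩ Iic t = ∅ := by
        ext r
        simp only [Set.mem_inter_iff, Set.mem_Ioo, Set.mem_Iic, Set.mem_empty_iff_false, iff_false]
        rintro ⟨⟨hr1, _⟩, hr3⟩
        linarith
      rw [this, measure_empty] at hv
      have : (0:ℝ≥0∞) < 1/2 := ENNReal.half_pos one_ne_zero
      rw [← hv] at this
      exact lt_irrefl _ this

lemma not_adm_one (h m : ℕ) (hh : 1 ≤ h) (hm : 1 ≤ m) : ¬ Admissible 1 h (m+1) := by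
  intro HA
  classical
  set μ : Fin (m+1) → Measure (Fin 1 → ℝ) := fun j => if j = 0 then M1 0 else M1 2 with hμdef
  obtain ⟨f, hflin, hcut⟩ := HA μ (fun j => by
    by_cases hj : j = 0 <;> simp only [hμdef, hj, if_true, if_false] <;> exact M1_mass _)
  set i : Fin h := ⟨0, hh⟩
  set a := (f i).linear (fun _ => (1:ℝ)) with ha
  have hane := a_ne (f i) (hflin i)
  set j1 : Fin (m+1) := ⟨1, by omega⟩ with hj1
  have hμ0 : μ 0 = M1 0 := by simp [hμdef]
  have hμ1 : μ j1 = M1 2 := by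
    have : j1 ≠ 0 := by
      rw [hj1]
      intro hcontra
      have := congrArg Fin.val hcontra
      simp at this
    simp [hμdef, this]
  -- each measure is bisected
  have hbis : ∀ c : ℝ, Cuts 1 h f (M1 c) → c < -(f i 0)/a ∧ -(f i 0)/a < c + 1 := by
    intro c hc
    have hhalf := (cuts_halfspace hh f (M1 c) hc i).1
    rw [M1_univ] at hhalf
    have hms : MeasurableSet {x : Fin 1 → ℝ | 0 ≤ f i x} :=
      measurableSet_le measurable_const (affine_cont (f i)).measurable
    rw [M1_apply c hms] at hhalf
    set t := -(f i 0)/a with ht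
    rcases hane.lt_or_gt with haneg | hapos
    · have hset : emb1 ⁻¹' {x : Fin 1 → ℝ | 0 ≤ f i x} = Iic t := by
        ext r
        simp only [Set.mem_preimage, Set.mem_setOf_eq, f_emb1, Set.mem_Iic, ht, ← ha]
        rw [le_div_iff_of_neg haneg]
        constructor <;> intro <;> nlinarith
      rw [hset, Set.inter_comm] at hhalf
      exact interval_Iic c t hhalf
    · have hset : emb1 ⁻¹' {x : Fin 1 → ℝ | 0 ≤ f i x} = Ici t := by
        ext r
        simp only [Set.mem_preimage, Set.mem_setOf_eq, f_emb1, Set.mem_Ici, ht, ← ha]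
        rw [div_le_iff₀ hapos]
        constructor <;> intro <;> nlinarith
      rw [hset, Set.inter_comm] at hhalf
      exact interval_Ici c t hhalf
  have h0 := hbis 0 (hμ0 ▸ hcut 0)
  have h2 := hbis 2 (hμ1 ▸ hcut j1)
  have := h0.2
  have := h2.1
  linarith

end DeltaAux

/-- for `h, m ≥ 1`, if `(d, h, m+1)` is admissible for some positive
`d`, then `Δ(h, m) ≤ Δ(h, m+1) − 1`. -/
theorem delta_le_delta_succ_sub_one (h m : ℕ) (hh : 1 ≤ h) (hm : 1 ≤ m)
    (H : ∃ d : ℕ, 0 < d ∧ Admissible d h (m + 1)) :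
    Delta h m ≤ Delta h (m + 1) - 1 := by
  obtain ⟨d0, hd0pos, hd0⟩ := H
  have hne : {d | 0 < d ∧ Admissible d h (m+1)}.Nonempty := ⟨d0, hd0pos, hd0⟩
  have hmem : Delta h (m+1) ∈ {d | 0 < d ∧ Admissible d h (m+1)} := Nat.sInf_mem hne
  set D := Delta h (m+1) with hD
  have hD1 : D ≠ 1 := by
    intro h1
    exact DeltaAux.not_adm_one h m hh hm (h1 ▸ hmem.2)
  have hD2 : 2 ≤ D := by
    have := hmem.1
    omega
  have hadm : Admissible (D-1) h m := by
    refine DeltaAux.step h m (D-1) hh (by omega) ?_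
    have hrw : (D-1) + 1 = D := by omega
    rw [hrw]
    exact hmem.2
  exact Nat.sInf_le ⟨by omega, hadm⟩
end

section
/- Assume Ramos' bound: for every integer x ≥ 0, the triple (15·2^x, 5, 2^{x+1}) is admissible. Then for every integer m ≥ 2, written as m = 2^q + r with integers q ≥ 0 and 0 < r ≤ 2^q, the triple (14·2^q + r, 5, m) is admissible; equivalently Δ(5, m) ≤ 14·2^q + r. (Proof idea: iterate the reduction 'if (d+1, h, m+1) is admissible then so is (d, h, m)' starting from Ramos' bound with x = q, i.e. from Δ(5, 2^{q+1}) ≤ 15·2^q, descending 2^q − r times.) -/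
open MeasureTheory

namespace Equi

variable {D : ℕ}

lemma affine_eval (f : (Fin D → ℝ) →ᵃ[ℝ] ℝ) (y : Fin D → ℝ) :
    f y = f.linear y + f 0 := by
  simpa using f.map_vadd 0 y

noncomputable def lf (a : Fin D → ℝ) : (Fin D → ℝ) →ₗ[ℝ] ℝ :=
  ∑ i, a i • (LinearMap.proj i : (Fin D → ℝ) →ₗ[ℝ] ℝ)

lemma lf_apply (a x : Fin D → ℝ) : lf a x = ∑ i, a i * x i := by
  simp [lf, LinearMap.sum_apply]

lemma lf_single (a : Fin D → ℝ) (j : Fin D) : lf a (Pi.single j 1) = a j := by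
  rw [lf_apply]
  simp [Pi.single_apply, Finset.sum_ite_eq']

lemma lf_eq_zero_iff {a : Fin D → ℝ} : lf a = 0 ↔ a = 0 := by
  constructor
  · intro h
    funext j
    have := congrArg (fun f => f (Pi.single j 1)) h
    simpa [lf_single] using this
  · rintro rfl; ext x; simp [lf_apply]

noncomputable def am (v : (Fin D → ℝ) × ℝ) : (Fin D → ℝ) →ᵃ[ℝ] ℝ where
  toFun x := lf v.1 x + v.2
  linear := lf v.1
  map_vadd' p w := by
    simp only [vadd_eq_add, map_add]
    ring

lemma am_apply (v : (Fin D → ℝ) × ℝ) (x : Fin D → ℝ) :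
    am v x = (∑ i, v.1 i * x i) + v.2 := by
  simp [am, lf_apply]

@[simp] lemma am_linear (v : (Fin D → ℝ) × ℝ) : (am v).linear = lf v.1 := rfl

/-- every affine functional comes from a pair -/
lemma exists_pair (f : (Fin D → ℝ) →ᵃ[ℝ] ℝ) :
    ∃ v : (Fin D → ℝ) × ℝ, (∀ x, f x = am v x) ∧ (f.linear ≠ 0 → v.1 ≠ 0) := by
  refine ⟨(fun i => f.linear (Pi.single i 1), f 0), fun x => ?_, fun h hv => ?_⟩
  · rw [affine_eval f x, am_apply]
    congr 1
    rw [LinearMap.pi_apply_eq_sum_univ f.linear x]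
    refine Finset.sum_congr rfl fun i _ => ?_
    rw [mul_comm, ← smul_eq_mul]
    congr 1
    congr 1
    funext j
    simp [Pi.single_apply, eq_comm]
  · apply h
    refine LinearMap.ext fun x => ?_
    rw [LinearMap.pi_apply_eq_sum_univ f.linear x]
    have hz : ∀ i : Fin D, f.linear (Pi.single i 1) = 0 := fun i => congrFun hv i
    refine Finset.sum_eq_zero fun i _ => ?_
    have hone : (fun j => if i = j then (1:ℝ) else 0) = Pi.single i 1 := by
      funext j; simp [Pi.single_apply, eq_comm]
    rw [hone, hz i, smul_zero]

/-- zero set of an affine functional with nonzero linear part is volume-null -/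
lemma volume_zero_set (f : (Fin D → ℝ) →ᵃ[ℝ] ℝ) (hf : f.linear ≠ 0) :
    volume {x | f x = 0} = 0 := by
  obtain ⟨z, hz⟩ : ∃ z, f.linear z = 1 := by
    by_contra h
    push_neg at h
    apply hf
    refine LinearMap.ext fun x => ?_
    rcases eq_or_ne (f.linear x) 0 with h0 | h0
    · simpa using h0
    · refine absurd ?_ (h ((f.linear x)⁻¹ • x))
      rw [f.linear.map_smul, smul_eq_mul, inv_mul_cancel₀ h0]
  set x0 := (-(f 0)) • z with hx0
  have hfx0 : f x0 = 0 := by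
    rw [affine_eval f x0, hx0, f.linear.map_smul, hz]
    simp
  have hset : {x | f x = 0} = ↑(AffineSubspace.mk' x0 (LinearMap.ker f.linear)) := by
    ext x
    simp only [Set.mem_setOf_eq, SetLike.mem_coe, AffineSubspace.mem_mk',
      vsub_eq_sub, LinearMap.mem_ker, map_sub]
    constructor
    · intro hx
      have h1 : f x - f x0 = f.linear x - f.linear x0 := by
        rw [affine_eval f x, affine_eval f x0]; ring
      rw [← h1, hx, hfx0, sub_zero]
    · intro hx
      have h1 : f x - f x0 = f.linear x - f.linear x0 := by
        rw [affine_eval f x, affine_eval f x0]; ring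
      rw [hfx0, sub_zero] at h1
      linarith
  rw [hset]
  refine Measure.addHaar_affineSubspace volume _ ?_
  intro htop
  have h2 : (AffineSubspace.mk' x0 (LinearMap.ker f.linear)).direction = ⊤ := by
    rw [htop, AffineSubspace.direction_top]
  rw [AffineSubspace.direction_mk'] at h2
  exact hf (LinearMap.ker_eq_top.mp h2)

/-- restriction of volume to a finite-volume set is a mass -/
lemma isMass_restrict (s : Set (Fin D → ℝ)) (hs : volume s ≠ ⊤) :
    IsMass D (volume.restrict s) := by
  constructor
  · exact ⟨by rw [Measure.restrict_apply_univ]; exact hs.lt_top⟩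
  · intro f hf
    have hm : MeasurableSet {x | f x = 0} := by
      have : Continuous f := f.continuous_of_finiteDimensional
      exact (isClosed_eq this continuous_const).measurableSet
    rw [Measure.restrict_apply hm]
    exact measure_mono_null Set.inter_subset_left (volume_zero_set f hf)

end Equi

open scoped ENNReal

namespace Equi

variable {D h : ℕ}

noncomputable def phi (v : (Fin D → ℝ) × ℝ) (x : Fin D → ℝ) : ℝ :=
  (∑ i, v.1 i * x i) + v.2

lemma am_eq_phi (v : (Fin D → ℝ) × ℝ) (x : Fin D → ℝ) : am v x = phi v x := am_apply v x

lemma phi_cont (v : (Fin D → ℝ) × ℝ) : Continuous (phi v) := by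
  unfold phi
  exact (continuous_finset_sum _ fun i _ => continuous_const.mul (continuous_apply i)).add
    continuous_const

lemma phi_neg (v : (Fin D → ℝ) × ℝ) (x : Fin D → ℝ) : phi (-v) x = -phi v x := by
  unfold phi
  have hs : ∑ i, (-v).1 i * x i = -∑ i, v.1 i * x i := by
    rw [← Finset.sum_neg_distrib]
    exact Finset.sum_congr rfl fun i _ => by simp
  rw [hs]
  have : (-v).2 = -v.2 := rfl
  rw [this]
  ring

lemma phi_smul (t : ℝ) (v : (Fin D → ℝ) × ℝ) (x : Fin D → ℝ) :
    phi (t • v) x = t * phi v x := by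
  unfold phi
  have h1 : (t • v).2 = t * v.2 := rfl
  have hs : ∑ i, (t • v).1 i * x i = t * ∑ i, v.1 i * x i := by
    rw [Finset.mul_sum]
    exact Finset.sum_congr rfl fun i _ => by
      have : (t • v).1 i = t * v.1 i := rfl
      rw [this]; ring
  rw [hs, h1]
  ring

def orth (v : Fin h → ((Fin D → ℝ) × ℝ)) (ε : Fin h → Bool) : Set (Fin D → ℝ) :=
  {x | ∀ i, 0 ≤ (if ε i then phi (v i) x else -(phi (v i) x))}

lemma isClosed_orth (v : Fin h → ((Fin D → ℝ) × ℝ)) (ε : Fin h → Bool) :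
    IsClosed (orth v ε) := by
  have horth : orth v ε = ⋂ i, {x | 0 ≤ (if ε i then phi (v i) x else -(phi (v i) x))} :=
    Set.ext fun x => ⟨fun hx => Set.mem_iInter.mpr hx, fun hx => Set.mem_iInter.mp hx⟩
  rw [horth]
  refine isClosed_iInter fun i => ?_
  cases hi : ε i <;> simp only [hi, Bool.false_eq_true, if_true, if_false]
  · exact isClosed_le continuous_const (phi_cont (v i)).neg
  · exact isClosed_le continuous_const (phi_cont (v i))

lemma measurableSet_orth (v : Fin h → ((Fin D → ℝ) × ℝ)) (ε : Fin h → Bool) :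
    MeasurableSet (orth v ε) := (isClosed_orth v ε).measurableSet

/-- `Cuts` in terms of orthants -/
lemma cuts_iff (v : Fin h → ((Fin D → ℝ) × ℝ)) (μ : Measure (Fin D → ℝ)) :
    Cuts D h (fun i => am (v i)) μ ↔ ∀ ε, μ (orth v ε) = μ Set.univ / 2 ^ h := by
  unfold Cuts orth
  constructor
  · intro hc ε
    have := hc ε
    convert this using 3 with x
    simp [am_eq_phi]
  · intro hc ε
    have := hc ε
    convert this using 3 with x
    simp [am_eq_phi]

/-- hyperplanes in an equipartition bisect -/
lemma halfspace_half (μ : Measure (Fin D → ℝ)) [IsFiniteMeasure μ]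
    (v : Fin h → ((Fin D → ℝ) × ℝ))
    (hnull : ∀ i, μ {x | phi (v i) x = 0} = 0)
    (hcut : ∀ ε, μ (orth v ε) = μ Set.univ / 2 ^ h) (i : Fin h) :
    μ {x | 0 ≤ phi (v i) x} = μ Set.univ / 2 := by
  classical
  set F : Finset (Fin h → Bool) := Finset.univ.filter (fun ε => ε i = true) with hF
  set F' : Finset (Fin h → Bool) := Finset.univ.filter (fun ε => ε i = false) with hF'
  have hun : {x | 0 ≤ phi (v i) x} = ⋃ ε ∈ F, orth v ε := by
    ext x
    simp only [Set.mem_setOf_eq, Set.mem_iUnion, hF, Finset.mem_filter, Finset.mem_univ,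
      true_and]
    constructor
    · intro hx
      refine ⟨fun j => if 0 ≤ phi (v j) x then true else false, by simp [hx], fun j => ?_⟩
      by_cases hj : 0 ≤ phi (v j) x
      · simp [hj]
      · simp only [hj, if_false, Bool.false_eq_true]
        push_neg at hj
        linarith
    · rintro ⟨ε, hεi, hε⟩
      have := hε i
      simpa [hεi] using this
  have hdisj : (↑F : Set (Fin h → Bool)).Pairwise (Function.onFun (MeasureTheory.AEDisjoint μ) (orth v)) := by
    intro ε _ ε' _ hne
    obtain ⟨j, hj⟩ : ∃ j, ε j ≠ ε' j := by
      by_contra hc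
      push_neg at hc
      exact hne (funext hc)
    refine measure_mono_null ?_ (hnull j)
    rintro x ⟨hx, hx'⟩
    show phi (v j) x = 0
    have h1 := hx j
    have h2 := hx' j
    rcases Bool.eq_false_or_eq_true (ε j) with hb | hb <;>
      rcases Bool.eq_false_or_eq_true (ε' j) with hb' | hb'
    · exact absurd (hb.trans hb'.symm) hj
    · simp only [hb, hb', Bool.false_eq_true, if_false, if_true] at h1 h2
      linarith
    · simp only [hb, hb', Bool.false_eq_true, if_false, if_true] at h1 h2
      linarith
    · exact absurd (hb.trans hb'.symm) hj
  have hsum : μ {x | 0 ≤ phi (v i) x} = ∑ ε ∈ F, μ (orth v ε) := by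
    rw [hun]
    exact measure_biUnion_finset₀ hdisj fun ε _ => (measurableSet_orth v ε).nullMeasurableSet
  have hbij : F.card = F'.card := by
    refine Finset.card_bij' (fun ε _ => Function.update ε i false)
      (fun ε _ => Function.update ε i true) ?_ ?_ ?_ ?_
    · intro ε hε
      simp [hF', Function.update_self]
    · intro ε hε
      simp [hF, Function.update_self]
    · intro ε hε
      simp only [hF, Finset.mem_filter, Finset.mem_univ, true_and] at hε
      funext j
      rcases eq_or_ne j i with rfl | hji
      · simp [Function.update_self, hε]
      · simp [Function.update_of_ne hji]
    · intro ε hε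
      simp only [hF', Finset.mem_filter, Finset.mem_univ, true_and] at hε
      funext j
      rcases eq_or_ne j i with rfl | hji
      · simp [Function.update_self, hε]
      · simp [Function.update_of_ne hji]
  have huniv : F ∪ F' = Finset.univ := by
    ext ε
    simp only [Finset.mem_union, hF, hF', Finset.mem_filter, Finset.mem_univ, true_and,
      iff_true]
    rcases Bool.eq_false_or_eq_true (ε i) with hb | hb
    · exact Or.inl hb
    · exact Or.inr hb
  have hdisjF : Disjoint F F' := by
    rw [Finset.disjoint_left]
    intro ε hε hε'
    simp only [hF, hF', Finset.mem_filter, Finset.mem_univ, true_and] at hε hε'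
    rw [hε] at hε'
    exact Bool.noConfusion hε'
  have hcard : 2 * F.card = 2 ^ h := by
    have h1 := Finset.card_union_of_disjoint hdisjF
    rw [huniv, Finset.card_univ] at h1
    have h2 : Fintype.card (Fin h → Bool) = 2 ^ h := by
      rw [Fintype.card_fun]
      simp
    omega
  rw [hsum, Finset.sum_congr rfl (fun ε _ => hcut ε), Finset.sum_const, nsmul_eq_mul]
  have hc0 : F.card ≠ 0 := by
    have := pow_pos (show (0:ℕ) < 2 by norm_num) h
    omega
  have h2c : ((2:ℝ≥0∞) ^ h) = 2 * (F.card : ℝ≥0∞) := by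
    rw [show ((2:ℝ≥0∞)) = ((2:ℕ):ℝ≥0∞) by simp, ← Nat.cast_pow, ← Nat.cast_mul, hcard]
  rw [h2c, ENNReal.div_eq_inv_mul, ENNReal.div_eq_inv_mul, ENNReal.mul_inv (by simp) (by simp),
    ← mul_assoc]
  congr 1
  rw [mul_comm ((2:ℝ≥0∞))⁻¹, ← mul_assoc,
    ENNReal.mul_inv_cancel (by exact_mod_cast hc0) (by simp), one_mul]

end Equi

namespace Equi

variable {D : ℕ}

def box (p : Fin D → ℝ) : Set (Fin D → ℝ) := Set.univ.pi fun i => Set.Icc (p i - 1) (p i + 1)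

lemma measurableSet_box (p : Fin D → ℝ) : MeasurableSet (box p) :=
  MeasurableSet.univ_pi fun i => measurableSet_Icc

lemma volume_box_ne_top (p : Fin D → ℝ) : volume (box p) ≠ ⊤ := by
  rw [box, volume_pi_pi]
  exact ENNReal.prod_ne_top fun i _ => by simp [Real.volume_Icc]

noncomputable def cubeM (p : Fin D → ℝ) : Measure (Fin D → ℝ) := volume.restrict (box p)

lemma isMass_cubeM (p : Fin D → ℝ) : IsMass D (cubeM p) :=
  isMass_restrict (box p) (volume_box_ne_top p)

lemma cubeM_univ_ne_top (p : Fin D → ℝ) : cubeM p Set.univ ≠ ⊤ := by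
  rw [cubeM, Measure.restrict_apply_univ]
  exact volume_box_ne_top p

/-- reflection through the center preserves `cubeM p` -/
lemma cubeM_reflect (p : Fin D → ℝ) (A : Set (Fin D → ℝ)) (hA : MeasurableSet A) :
    cubeM p ((fun x => (fun i => 2 * p i - x i)) ⁻¹' A) = cubeM p A := by
  set R : (Fin D → ℝ) → (Fin D → ℝ) := fun x => (fun i => 2 * p i - x i) with hR
  have hRsub : R = fun x => (fun i => 2 * p i) - x := by
    funext x i; simp [hR, Pi.sub_apply]
  have hmp : MeasurePreserving R volume volume := by
    rw [hRsub]
    exact Measure.measurePreserving_sub_left volume _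
  have hRbox : R ⁻¹' (box p) = box p := by
    ext x
    simp only [Set.mem_preimage, box, Set.mem_pi, Set.mem_univ, true_implies, hR,
      Set.mem_Icc]
    constructor <;> intro hx i <;> have := hx i <;> constructor <;> linarith [this.1, this.2]
  have h1 : R ⁻¹' A ∩ box p = R ⁻¹' (A ∩ box p) := by
    rw [Set.preimage_inter, hRbox]
  rw [cubeM, Measure.restrict_apply (hmp.measurable hA), Measure.restrict_apply hA, h1,
    hmp.measure_preimage (hA.inter (measurableSet_box p)).nullMeasurableSet]

/-- if a hyperplane bisects the cube, it passes through the center: positive side -/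
lemma cube_aux (p : Fin D → ℝ) (v : (Fin D → ℝ) × ℝ) (ha : v.1 ≠ 0)
    (hs : 0 < phi v p) :
    cubeM p {x | 0 ≤ phi v x} ≠ cubeM p Set.univ / 2 := by
  intro heq
  set σ := cubeM p with hσ
  set T := σ Set.univ with hT
  have hTtop : T ≠ ⊤ := cubeM_univ_ne_top p
  have hnull : σ {x | phi v x = 0} = 0 := by
    have := (isMass_cubeM p).2 (am v) (by
      rw [am_linear]
      exact fun hz => ha (lf_eq_zero_iff.mp hz))
    have hset : {x | am v x = 0} = {x | phi v x = 0} := by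
      ext x; simp [am_eq_phi]
    rwa [hset] at this
  have hmeas_le : MeasurableSet {x | 0 ≤ phi v x} :=
    (isClosed_le continuous_const (phi_cont v)).measurableSet
  have hmeas_lt0 : MeasurableSet {x | phi v x < 0} :=
    (isOpen_lt (phi_cont v) continuous_const).measurableSet
  have hmeas_gt0 : MeasurableSet {x | 0 < phi v x} :=
    (isOpen_lt continuous_const (phi_cont v)).measurableSet
  -- σ {0 ≤ phi} = σ {0 < phi}
  have e1 : σ {x | 0 ≤ phi v x} = σ {x | 0 < phi v x} := by
    have hsplit : {x | 0 ≤ phi v x} = {x | 0 < phi v x} ∪ {x | phi v x = 0} := by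
      ext x
      simp only [Set.mem_setOf_eq, Set.mem_union]
      constructor
      · intro hx
        rcases eq_or_lt_of_le hx with hx' | hx'
        · exact Or.inr hx'.symm
        · exact Or.inl hx'
      · rintro (hx | hx) <;> [exact hx.le; exact hx.ge]
    rw [hsplit]
    refine le_antisymm ((measure_union_le _ _).trans (by rw [hnull, add_zero]))
      (measure_mono Set.subset_union_left)
  -- reflection: σ {0 < phi} = σ {phi < 2 * phi v p}
  have hrefl : ∀ x, phi v (fun i => 2 * p i - x i) = 2 * phi v p - phi v x := by
    intro x
    unfold phi
    have hsum : ∑ i, v.1 i * (2 * p i - x i)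
        = 2 * (∑ i, v.1 i * p i) - ∑ i, v.1 i * x i := by
      rw [Finset.mul_sum, ← Finset.sum_sub_distrib]
      exact Finset.sum_congr rfl fun i _ => by ring
    rw [hsum]
    ring
  have e2 : σ {x | 0 < phi v x} = σ {x | phi v x < 2 * phi v p} := by
    have hpre : (fun x => (fun i => 2 * p i - x i)) ⁻¹' {x | 0 < phi v x}
        = {x | phi v x < 2 * phi v p} := by
      ext x
      simp only [Set.mem_preimage, Set.mem_setOf_eq, hrefl]
      constructor <;> intro <;> linarith
    rw [← hpre, cubeM_reflect p _ hmeas_gt0]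
  -- complement
  have e3 : σ {x | 0 ≤ phi v x} + σ {x | phi v x < 0} = T := by
    have hcompl : {x | phi v x < 0} = {x | 0 ≤ phi v x}ᶜ := by
      ext x
      simp [not_le]
    rw [hcompl]
    exact measure_add_measure_compl hmeas_le
  -- slab positivity
  have hslab : 0 < σ {x | 0 < phi v x ∧ phi v x < 2 * phi v p} := by
    set U : Set (Fin D → ℝ) :=
      ({x | 0 < phi v x} ∩ {x | phi v x < 2 * phi v p}) ∩ Set.univ.pi fun i => Set.Ioo (p i - 1) (p i + 1) with hU
    have hUopen : IsOpen U := by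
      refine IsOpen.inter (IsOpen.inter ?_ ?_) ?_
      · exact isOpen_lt continuous_const (phi_cont v)
      · exact isOpen_lt (phi_cont v) continuous_const
      · exact isOpen_set_pi Set.finite_univ fun i _ => isOpen_Ioo
    have hpU : p ∈ U := by
      refine ⟨⟨hs, show phi v p < 2 * phi v p by linarith⟩, ?_⟩
      intro i _
      exact ⟨by linarith, by linarith⟩
    have hUsub : U ⊆ {x | 0 < phi v x ∧ phi v x < 2 * phi v p} ∩ box p := by
      rintro x ⟨⟨h1, h2⟩, h3⟩
      exact ⟨⟨h1, h2⟩, fun i hi => Set.Ioo_subset_Icc_self (h3 i hi)⟩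
    have hmeasS : MeasurableSet {x | 0 < phi v x ∧ phi v x < 2 * phi v p} := by
      have : {x | 0 < phi v x ∧ phi v x < 2 * phi v p}
          = {x | 0 < phi v x} ∩ {x | phi v x < 2 * phi v p} := rfl
      rw [this]
      exact hmeas_gt0.inter ((isOpen_lt (phi_cont v) continuous_const).measurableSet)
    rw [hσ, cubeM, Measure.restrict_apply hmeasS]
    calc (0:ℝ≥0∞) < volume U := hUopen.measure_pos volume ⟨p, hpU⟩
      _ ≤ volume ({x | 0 < phi v x ∧ phi v x < 2 * phi v p} ∩ box p) := measure_mono hUsub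
  -- combine
  have hσlt : σ {x | phi v x < 0} = T / 2 := by
    have : T / 2 + σ {x | phi v x < 0} = T := by rw [← heq]; exact e3
    have h2 : T / 2 + σ {x | phi v x < 0} = T / 2 + T / 2 := by
      rw [this, ENNReal.add_halves]
    exact (ENNReal.add_right_inj
      (ENNReal.div_lt_top hTtop (by norm_num)).ne).mp h2
  have hsub : {x | phi v x < 0} ∪ {x | 0 < phi v x ∧ phi v x < 2 * phi v p}
      ⊆ {x | phi v x < 2 * phi v p} := by
    rintro x (hx | hx)
    · have : (0:ℝ) < 2 * phi v p := by linarith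
      exact lt_trans hx this
    · exact hx.2
  have hdisj : Disjoint {x | phi v x < 0} {x | 0 < phi v x ∧ phi v x < 2 * phi v p} := by
    rw [Set.disjoint_left]
    rintro x hx ⟨hx1, _⟩
    exact absurd hx1 (by simpa using hx.le)
  have hge : σ {x | phi v x < 2 * phi v p}
      ≥ σ {x | phi v x < 0} + σ {x | 0 < phi v x ∧ phi v x < 2 * phi v p} := by
    rw [← measure_union hdisj (by
      have : {x | 0 < phi v x ∧ phi v x < 2 * phi v p}
          = {x | 0 < phi v x} ∩ {x | phi v x < 2 * phi v p} := rfl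
      rw [this]
      exact hmeas_gt0.inter ((isOpen_lt (phi_cont v) continuous_const).measurableSet))]
    exact measure_mono hsub
  rw [hσlt] at hge
  have hchain : T / 2 ≥ T / 2 + σ {x | 0 < phi v x ∧ phi v x < 2 * phi v p} := by
    calc T / 2 = σ {x | 0 ≤ phi v x} := heq.symm
      _ = σ {x | 0 < phi v x} := e1
      _ = σ {x | phi v x < 2 * phi v p} := e2
      _ ≥ T / 2 + σ {x | 0 < phi v x ∧ phi v x < 2 * phi v p} := hge
  have : σ {x | 0 < phi v x ∧ phi v x < 2 * phi v p} = 0 := by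
    by_contra hne
    have hlt : T / 2 + 0 < T / 2 + σ {x | 0 < phi v x ∧ phi v x < 2 * phi v p} := by
      refine ENNReal.add_lt_add_left ((ENNReal.div_lt_top hTtop (by norm_num)).ne) ?_
      exact pos_iff_ne_zero.mpr hne
    rw [add_zero] at hlt
    exact absurd hchain (by simpa using hlt)
  exact absurd this (ne_of_gt hslab)

/-- a hyperplane bisecting the cube passes through its center -/
lemma cube_center (p : Fin D → ℝ) (v : (Fin D → ℝ) × ℝ) (ha : v.1 ≠ 0)
    (heq : cubeM p {x | 0 ≤ phi v x} = cubeM p Set.univ / 2) : phi v p = 0 := by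
  by_contra hs
  rcases lt_or_gt_of_ne hs with hneg | hpos
  · -- apply cube_aux to -v
    refine cube_aux p (-v) (by simpa using ha) (by rw [phi_neg]; linarith) ?_
    have hset : {x | 0 ≤ phi (-v) x} = {x | phi v x ≤ 0} := by
      ext x; simp [phi_neg, neg_nonneg]
    rw [hset]
    -- σ {phi ≤ 0} = T - σ {0 < phi} = T - σ {0 ≤ phi} = T/2
    set σ := cubeM p
    set T := σ Set.univ with hT
    have hTtop : T ≠ ⊤ := cubeM_univ_ne_top p
    have hnull : σ {x | phi v x = 0} = 0 := by
      have := (isMass_cubeM p).2 (am v) (by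
        rw [am_linear]
        exact fun hz => ha (lf_eq_zero_iff.mp hz))
      have hset2 : {x | am v x = 0} = {x | phi v x = 0} := by
        ext x; simp [am_eq_phi]
      rwa [hset2] at this
    have hmeas_le : MeasurableSet {x | 0 ≤ phi v x} :=
      (isClosed_le continuous_const (phi_cont v)).measurableSet
    have e1 : σ {x | phi v x ≤ 0} = σ {x | phi v x < 0} := by
      have hsplit : {x | phi v x ≤ 0} = {x | phi v x < 0} ∪ {x | phi v x = 0} := by
        ext x
        simp only [Set.mem_setOf_eq, Set.mem_union]
        constructor
        · intro hx
          rcases eq_or_lt_of_le hx with hx' | hx'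
          · exact Or.inr hx'
          · exact Or.inl hx'
        · rintro (hx | hx) <;> [exact hx.le; exact hx.le]
      rw [hsplit]
      refine le_antisymm ((measure_union_le _ _).trans (by rw [hnull, add_zero]))
        (measure_mono Set.subset_union_left)
    have e3 : σ {x | 0 ≤ phi v x} + σ {x | phi v x < 0} = T := by
      have hcompl : {x | phi v x < 0} = {x | 0 ≤ phi v x}ᶜ := by
        ext x; simp [not_le]
      rw [hcompl]
      exact measure_add_measure_compl hmeas_le
    have : T / 2 + σ {x | phi v x < 0} = T := by rw [← heq]; exact e3
    have h2 : T / 2 + σ {x | phi v x < 0} = T / 2 + T / 2 := by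
      rw [this, ENNReal.add_halves]
    have := (ENNReal.add_right_inj
      ((ENNReal.div_lt_top hTtop (by norm_num)).ne)).mp h2
    rw [e1, this]
  · exact cube_aux p v ha hpos heq

end Equi

namespace Equi

variable {d k h : ℕ}

lemma affine_add {E : Type*} [AddCommGroup E] [Module ℝ E] (f : E →ᵃ[ℝ] ℝ) (u w : E) :
    f (u + w) = f.linear u + f w := by
  simpa using f.map_vadd w u

noncomputable def appL : ((Fin d → ℝ) × (Fin k → ℝ)) →ₗ[ℝ] (Fin (d + k) → ℝ) where
  toFun p := Fin.append p.1 p.2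
  map_add' p q := by
    funext i
    refine Fin.addCases (fun i0 => ?_) (fun j0 => ?_) i <;>
      simp [Fin.append_left, Fin.append_right]
  map_smul' c p := by
    funext i
    refine Fin.addCases (fun i0 => ?_) (fun j0 => ?_) i <;>
      simp [Fin.append_left, Fin.append_right]

lemma appL_apply (p : (Fin d → ℝ) × (Fin k → ℝ)) : appL p = Fin.append p.1 p.2 := rfl

lemma appL_surj : Function.Surjective (appL (d := d) (k := k)) := by
  intro z
  refine ⟨(fun i => z (Fin.castAdd k i), fun j => z (Fin.natAdd d j)), ?_⟩
  funext i
  refine Fin.addCases (fun i0 => ?_) (fun j0 => ?_) i <;>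
    simp [appL_apply, Fin.append_left, Fin.append_right]

lemma appL_cont : Continuous (appL (d := d) (k := k)) :=
  LinearMap.continuous_of_finiteDimensional _

lemma appL_meas : Measurable (appL (d := d) (k := k)) := appL_cont.measurable

/-- splitting `phi` along the two blocks -/
lemma phi_append (v : (Fin (d + k) → ℝ) × ℝ) (x : Fin d → ℝ) (y : Fin k → ℝ) :
    phi v (Fin.append x y)
      = (∑ i, v.1 (Fin.castAdd k i) * x i) + (∑ t, v.1 (Fin.natAdd d t) * y t) + v.2 := by
  unfold phi
  rw [Fin.sum_univ_add]
  simp only [Fin.append_left, Fin.append_right]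

/-- trace of a functional on the first block -/
noncomputable def trace (v : (Fin (d + k) → ℝ) × ℝ) : (Fin d → ℝ) × ℝ :=
  (fun i => v.1 (Fin.castAdd k i), v.2)

lemma phi_append_vert (v : (Fin (d + k) → ℝ) × ℝ)
    (hv : ∀ t, v.1 (Fin.natAdd d t) = 0) (x : Fin d → ℝ) (y : Fin k → ℝ) :
    phi v (Fin.append x y) = phi (trace v) x := by
  rw [phi_append]
  have : ∑ t, v.1 (Fin.natAdd d t) * y t = 0 :=
    Finset.sum_eq_zero fun t _ => by rw [hv t, zero_mul]
  rw [this]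
  unfold trace phi
  simp

/-- the unit cube probability measure -/
noncomputable def ucube : Measure (Fin k → ℝ) :=
  volume.restrict (Set.univ.pi fun _ => Set.Icc 0 1)

lemma ucube_univ : (ucube (k := k)) Set.univ = 1 := by
  rw [ucube, Measure.restrict_apply_univ, volume_pi_pi]
  simp [Real.volume_Icc]

instance : IsProbabilityMeasure (ucube (k := k)) := ⟨ucube_univ⟩

lemma isMass_ucube : IsMass k (ucube (k := k)) := by
  refine isMass_restrict _ ?_
  rw [volume_pi_pi]
  exact ENNReal.prod_ne_top fun i _ => by simp [Real.volume_Icc]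

/-- thickening of a mass to `d + k` dimensions -/
noncomputable def thick (μ : Measure (Fin d → ℝ)) : Measure (Fin (d + k) → ℝ) :=
  (μ.prod ucube).map appL

lemma thick_apply (μ : Measure (Fin d → ℝ)) [SFinite μ] {S : Set (Fin (d + k) → ℝ)}
    (hS : MeasurableSet S) : thick μ S = (μ.prod ucube) (appL ⁻¹' S) :=
  Measure.map_apply appL_meas hS

lemma thick_univ (μ : Measure (Fin d → ℝ)) [SFinite μ] :
    (thick (k := k) μ) Set.univ = μ Set.univ := by
  rw [thick_apply μ MeasurableSet.univ, Set.preimage_univ, ← Set.univ_prod_univ,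
    Measure.prod_prod, ucube_univ, mul_one]

lemma isMass_thick (μ : Measure (Fin d → ℝ)) (hμ : IsMass d μ) :
    IsMass (d + k) (thick (k := k) μ) := by
  haveI : IsFiniteMeasure μ := hμ.1
  constructor
  · exact ⟨by rw [thick_univ]; exact measure_lt_top μ _⟩
  · intro f hf
    have hS : MeasurableSet {z | f z = 0} :=
      (isClosed_eq f.continuous_of_finiteDimensional continuous_const).measurableSet
    rw [thick_apply μ hS]
    set g : ((Fin d → ℝ) × (Fin k → ℝ)) →ᵃ[ℝ] ℝ := f.comp appL.toAffineMap with hg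
    have hgapp : ∀ p : (Fin d → ℝ) × (Fin k → ℝ), g p = f (appL p) := fun p => rfl
    have hglin : g.linear = f.linear ∘ₗ appL := rfl
    have hpre : appL ⁻¹' {z | f z = 0} = {p | g p = 0} := rfl
    have hpre_meas : MeasurableSet {p : (Fin d → ℝ) × (Fin k → ℝ) | g p = 0} :=
      (isClosed_eq g.continuous_of_finiteDimensional continuous_const).measurableSet
    rw [hpre, Measure.prod_apply hpre_meas]
    by_cases hB : g.linear ∘ₗ LinearMap.inr ℝ (Fin d → ℝ) (Fin k → ℝ) = 0
    · -- horizontal case: slices constant in y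
      set B : (Fin d → ℝ) →ᵃ[ℝ] ℝ :=
        g.comp (LinearMap.inl ℝ (Fin d → ℝ) (Fin k → ℝ)).toAffineMap with hBdef
      have hBapp : ∀ x, B x = g (x, 0) := fun x => rfl
      have hBlin : B.linear ≠ 0 := by
        intro hB0
        have hlin0 : g.linear = 0 := by
          refine LinearMap.ext fun p => ?_
          have h1 : g.linear (p.1, p.2) = g.linear (p.1, 0) + g.linear (0, p.2) := by
            rw [← LinearMap.map_add]
            norm_num
          have h2 : g.linear (0, p.2) = 0 := by
            have := congrFun (congrArg (fun (l : _ →ₗ[ℝ] ℝ) => (l : _ → ℝ)) hB) p.2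
            simpa using this
          have h3 : g.linear (p.1, 0) = 0 := by
            have hBlin' : B.linear = g.linear ∘ₗ
                LinearMap.inl ℝ (Fin d → ℝ) (Fin k → ℝ) := rfl
            have := congrFun (congrArg (fun (l : _ →ₗ[ℝ] ℝ) => (l : _ → ℝ)) hB0) p.1
            simpa [hBlin'] using this
          show g.linear p = 0
          calc g.linear p = g.linear (p.1, p.2) := rfl
            _ = 0 := by rw [h1, h2, h3, add_zero]
        apply hf
        refine LinearMap.ext fun z => ?_
        obtain ⟨p, rfl⟩ := appL_surj z
        have := congrFun (congrArg (fun (l : _ →ₗ[ℝ] ℝ) => (l : _ → ℝ)) hlin0) p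
        rw [hglin] at this
        simpa using this
      have hslice : ∀ x : Fin d → ℝ, (Prod.mk x ⁻¹' {p | g p = 0})
          = if B x = 0 then (Set.univ : Set (Fin k → ℝ)) else ∅ := by
        intro x
        have hgy : ∀ y : Fin k → ℝ, g (x, y) = B x := by
          intro y
          have h1 : g (x, y) = g.linear (0, y) + g ((x, y) - (0, y)) := by
            have := affine_add g (0, y) ((x, y) - (0, y))
            simpa using this
          have h2 : g.linear (0, y) = 0 := by
            have := congrFun (congrArg (fun (l : _ →ₗ[ℝ] ℝ) => (l : _ → ℝ)) hB) y
            simpa using this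
          rw [h2, zero_add] at h1
          rw [hBapp]
          convert h1 using 2
          simp [Prod.ext_iff]
        by_cases hx : B x = 0
        · rw [if_pos hx]
          ext y
          simp [hgy y, hx]
        · rw [if_neg hx]
          ext y
          simp [hgy y, hx]
      have hcalc : ∀ x : Fin d → ℝ, ucube (Prod.mk x ⁻¹' {p | g p = 0})
          = Set.indicator {x | B x = 0} (fun _ => (ucube (k := k)) Set.univ) x := by
        intro x
        rw [hslice x]
        by_cases hx : B x = 0
        · rw [if_pos hx, Set.indicator_of_mem (show x ∈ {x | B x = 0} from hx)]
        · rw [if_neg hx, Set.indicator_of_notMem (show x ∉ {x | B x = 0} from hx)]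
          simp
      rw [MeasureTheory.lintegral_congr hcalc]
      have hBmeas : MeasurableSet {x | B x = 0} :=
        (isClosed_eq B.continuous_of_finiteDimensional continuous_const).measurableSet
      rw [MeasureTheory.lintegral_indicator_const hBmeas, hμ.2 B hBlin, mul_zero]
    · -- vertical case: every slice is a null hyperplane
      have hzero : ∀ x : Fin d → ℝ, ucube (Prod.mk x ⁻¹' {p | g p = 0}) = 0 := by
        intro x
        set Ax : (Fin k → ℝ) →ᵃ[ℝ] ℝ := g.comp
          { toFun := fun y => (x, y)
            linear := LinearMap.inr ℝ (Fin d → ℝ) (Fin k → ℝ)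
            map_vadd' := fun p w => by
              show (x, w + p) = (0, w) + (x, p)
              simp } with hAx
        have hAxapp : ∀ y, Ax y = g (x, y) := fun y => rfl
        have hAxlin : Ax.linear ≠ 0 := by
          intro h0
          apply hB
          refine LinearMap.ext fun y => ?_
          have hAxlin' : Ax.linear = g.linear ∘ₗ
              LinearMap.inr ℝ (Fin d → ℝ) (Fin k → ℝ) := rfl
          have := congrFun (congrArg (fun (l : _ →ₗ[ℝ] ℝ) => (l : _ → ℝ)) h0) y
          rw [hAxlin'] at this
          simpa using this
        have hset : (Prod.mk x ⁻¹' {p | g p = 0}) = {y | Ax y = 0} := by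
          ext y
          simp [hAxapp]
        rw [hset]
        exact (isMass_ucube).2 Ax hAxlin
      rw [MeasureTheory.lintegral_congr hzero]
      simp

/-- orthant measures for vertical hyperplane families -/
lemma thick_orth (μ : Measure (Fin d → ℝ)) [SFinite μ]
    (v : Fin h → ((Fin (d + k) → ℝ) × ℝ))
    (hvert : ∀ i t, (v i).1 (Fin.natAdd d t) = 0) (ε : Fin h → Bool) :
    (thick (k := k) μ) (orth v ε) = μ (orth (fun i => trace (v i)) ε) := by
  rw [thick_apply μ (measurableSet_orth v ε)]
  have hpre : appL ⁻¹' (orth v ε) = (orth (fun i => trace (v i)) ε) ×ˢ Set.univ := by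
    ext p
    simp only [Set.mem_preimage, Set.mem_prod, Set.mem_univ, and_true, orth,
      Set.mem_setOf_eq, appL_apply]
    constructor
    · intro hp i
      have := hp i
      rwa [phi_append_vert (v i) (hvert i) p.1 p.2] at this
    · intro hp i
      have := hp i
      rwa [← phi_append_vert (v i) (hvert i) p.1 p.2] at this
  rw [hpre, Measure.prod_prod, ucube_univ, mul_one]

end Equi

namespace Equi

variable {D h : ℕ}

lemma phi_cont_v (x : Fin D → ℝ) : Continuous (fun v : (Fin D → ℝ) × ℝ => phi v x) := by
  unfold phi
  refine Continuous.add ?_ continuous_snd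
  exact continuous_finset_sum _ fun i _ =>
    (((continuous_apply i).comp continuous_fst).mul continuous_const)

lemma mass_phi_null (μ : Measure (Fin D → ℝ)) (hμ : IsMass D μ)
    (v : (Fin D → ℝ) × ℝ) (hv : v.1 ≠ 0) : μ {x | phi v x = 0} = 0 := by
  have := hμ.2 (am v) (by
    rw [am_linear]
    exact fun hz => hv (lf_eq_zero_iff.mp hz))
  have hset : {x | am v x = 0} = {x | phi v x = 0} := by
    ext x; simp [am_eq_phi]
  rwa [hset] at this

lemma tendsto_orth (μ : Measure (Fin D → ℝ)) [IsFiniteMeasure μ]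
    (u : ℕ → Fin h → ((Fin D → ℝ) × ℝ)) (w : Fin h → ((Fin D → ℝ) × ℝ))
    (hconv : ∀ i, Filter.Tendsto (fun n => u n i) Filter.atTop (nhds (w i)))
    (hnull : ∀ i, μ {x | phi (w i) x = 0} = 0) (ε : Fin h → Bool) :
    Filter.Tendsto (fun n => μ (orth (u n) ε)) Filter.atTop (nhds (μ (orth w ε))) := by
  have hrepr : ∀ (vv : Fin h → ((Fin D → ℝ) × ℝ)),
      μ (orth vv ε) = ∫⁻ x, (orth vv ε).indicator (fun _ => (1:ℝ≥0∞)) x ∂μ := by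
    intro vv
    rw [MeasureTheory.lintegral_indicator_const (measurableSet_orth vv ε), one_mul]
  simp only [hrepr]
  refine MeasureTheory.tendsto_lintegral_of_dominated_convergence (fun _ => (1:ℝ≥0∞))
    (fun n => measurable_const.indicator (measurableSet_orth (u n) ε))
    (fun n => Filter.Eventually.of_forall fun x => ?_) ?_ ?_
  · by_cases hx : x ∈ orth (u n) ε
    · rw [Set.indicator_of_mem hx]
    · rw [Set.indicator_of_notMem hx]
      exact zero_le
  · rw [MeasureTheory.lintegral_const]
    exact ENNReal.mul_ne_top (by simp) (measure_ne_top μ _)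
  · -- a.e. pointwise convergence
    have hN : μ (⋃ i, {x | phi (w i) x = 0}) = 0 :=
      measure_iUnion_null fun i => hnull i
    refine (MeasureTheory.measure_eq_zero_iff_ae_notMem.mp hN).mono fun x hx => ?_
    have hxi : ∀ i, phi (w i) x ≠ 0 := by
      intro i hi
      exact hx (Set.mem_iUnion.mpr ⟨i, hi⟩)
    have hni : ∀ i, Filter.Tendsto (fun n => phi (u n i) x) Filter.atTop
        (nhds (phi (w i) x)) :=
      fun i => ((phi_cont_v x).tendsto (w i)).comp (hconv i)
    have hiff : ∀ i, ∀ᶠ n in Filter.atTop,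
        ((0 ≤ if ε i then phi (u n i) x else -(phi (u n i) x)) ↔
          (0 ≤ if ε i then phi (w i) x else -(phi (w i) x))) := by
      intro i
      rcases lt_or_gt_of_ne (hxi i) with hs | hs
      · filter_upwards [(hni i).eventually (gt_mem_nhds hs)] with n hn
        cases hε : ε i <;> simp only [Bool.false_eq_true, if_true, if_false]
        · constructor <;> intro <;> linarith
        · constructor <;> intro <;> linarith
      · filter_upwards [(hni i).eventually (lt_mem_nhds hs)] with n hn
        cases hε : ε i <;> simp only [Bool.false_eq_true, if_true, if_false]
        · constructor <;> intro <;> linarith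
        · constructor <;> intro <;> linarith
    have hev : ∀ᶠ n in Filter.atTop,
        (orth (u n) ε).indicator (fun _ => (1:ℝ≥0∞)) x
          = (orth w ε).indicator (fun _ => (1:ℝ≥0∞)) x := by
      filter_upwards [Filter.eventually_all.mpr hiff] with n hn
      have hmem : x ∈ orth (u n) ε ↔ x ∈ orth w ε := by
        unfold orth
        exact forall_congr' hn
      by_cases hxw : x ∈ orth w ε
      · rw [Set.indicator_of_mem (hmem.mpr hxw), Set.indicator_of_mem hxw]
      · rw [Set.indicator_of_notMem (fun hc => hxw (hmem.mp hc)),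
          Set.indicator_of_notMem hxw]
    exact Filter.Tendsto.congr' (hev.mono fun n hn => hn.symm) tendsto_const_nhds

end Equi

namespace Equi

variable {D d k h m : ℕ}

lemma orth_congr (f : Fin h → ((Fin D → ℝ) →ᵃ[ℝ] ℝ)) (v : Fin h → ((Fin D → ℝ) × ℝ))
    (hfv : ∀ i x, f i x = phi (v i) x) (ε : Fin h → Bool) :
    {x | ∀ i, 0 ≤ (if ε i then f i x else -(f i x))} = orth v ε := by
  ext x
  refine forall_congr' fun i => ?_
  cases hε : ε i <;> simp only [Bool.false_eq_true, if_true, if_false, hfv i x]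

lemma orth_scale (r : Fin h → ℝ) (hr : ∀ i, 0 < r i) (v : Fin h → ((Fin D → ℝ) × ℝ))
    (ε : Fin h → Bool) : orth (fun i => r i • v i) ε = orth v ε := by
  ext x
  refine forall_congr' fun i => ?_
  rw [phi_smul]
  cases hε : ε i <;> simp only [Bool.false_eq_true, if_true, if_false]
  · rw [← mul_neg]
    exact mul_nonneg_iff_of_pos_left (hr i)
  · exact mul_nonneg_iff_of_pos_left (hr i)

lemma phi_single (v : (Fin D → ℝ) × ℝ) (idx : Fin D) (c : ℝ) :
    phi v (Pi.single idx c) = v.1 idx * c + v.2 := by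
  unfold phi
  congr 1
  rw [Finset.sum_eq_single idx]
  · simp
  · intro b _ hb
    simp [Pi.single_apply, hb]
  · simp

/-- The key reduction: admissibility in dimension `d + k` for `m + k` masses implies
admissibility in dimension `d` for `m` masses. -/
lemma key_reduction (hd : 0 < d) (hadm : Admissible (d + k) h (m + k)) :
    Admissible d h m := by
  classical
  intro μ hμ
  haveI : ∀ j, IsFiniteMeasure (μ j) := fun j => (hμ j).1
  by_cases hall : ∀ j, μ j Set.univ = 0
  · -- all masses vanish: any hyperplanes work
    refine ⟨fun _ => am (Pi.single ⟨0, hd⟩ 1, 0), fun i => ?_, fun j => ?_⟩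
    · rw [am_linear]
      intro h0
      have h1 := congrFun (lf_eq_zero_iff.mp h0) ⟨0, hd⟩
      simp at h1
    · intro ε
      have hle : μ j {x | ∀ i, 0 ≤ (if ε i then am (Pi.single (⟨0, hd⟩ : Fin d) (1:ℝ), (0:ℝ)) x
          else -(am (Pi.single (⟨0, hd⟩ : Fin d) (1:ℝ), (0:ℝ)) x))} ≤ μ j Set.univ :=
        measure_mono (Set.subset_univ _)
      rw [hall j] at hle ⊢
      rw [ENNReal.zero_div]
      exact le_antisymm hle zero_le
  · push_neg at hall
    obtain ⟨j0, hj0⟩ := hall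
    set cpt : ℕ → Fin k → (Fin (d + k) → ℝ) :=
      fun n t => Pi.single (Fin.natAdd d t) (n:ℝ) with hcpt
    set F : ℕ → Fin (m + k) → Measure (Fin (d + k) → ℝ) :=
      fun n => Fin.append (fun j => thick (μ j)) (fun t => cubeM (cpt n t)) with hFdef
    have hFmass : ∀ n jj, IsMass (d + k) (F n jj) := by
      intro n jj
      refine Fin.addCases (fun j => ?_) (fun t => ?_) jj
      · simp only [hFdef, Fin.append_left]
        exact isMass_thick (μ j) (hμ j)
      · simp only [hFdef, Fin.append_right]
        exact isMass_cubeM _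
    have hex : ∀ n, ∃ v : Fin h → ((Fin (d + k) → ℝ) × ℝ),
        (∀ i, (v i).1 ≠ 0 ∧ ‖v i‖ = 1) ∧
        (∀ jj ε, (F n jj) (orth v ε) = (F n jj) Set.univ / 2 ^ h) := by
      intro n
      obtain ⟨f, hflin, hfcut⟩ := hadm (F n) (hFmass n)
      have hvp : ∀ i, ∃ v0 : (Fin (d + k) → ℝ) × ℝ,
          (∀ x, f i x = am v0 x) ∧ (v0.1 ≠ 0) := by
        intro i
        obtain ⟨v0, hv0, hv0'⟩ := exists_pair (f i)
        exact ⟨v0, hv0, hv0' (hflin i)⟩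
      choose v0 hv0app hv0ne using hvp
      set r : Fin h → ℝ := fun i => ‖v0 i‖⁻¹ with hrdef
      have hv0norm : ∀ i, ‖v0 i‖ ≠ 0 := by
        intro i hni
        have h0 : v0 i = 0 := norm_eq_zero.mp hni
        exact hv0ne i (by rw [h0]; rfl)
      have hrpos : ∀ i, 0 < r i := fun i =>
        inv_pos.mpr ((hv0norm i).lt_of_le' (norm_nonneg _))
      refine ⟨fun i => r i • v0 i, fun i => ⟨?_, ?_⟩, fun jj ε => ?_⟩
      · have h0 : (r i • v0 i).1 = r i • (v0 i).1 := rfl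
        rw [h0]
        exact smul_ne_zero (ne_of_gt (hrpos i)) (hv0ne i)
      · rw [norm_smul, hrdef]
        simp only [norm_inv, norm_norm]
        exact inv_mul_cancel₀ (hv0norm i)
      · have h1 := hfcut jj ε
        rwa [orth_congr f v0 (fun i x => by rw [hv0app i x, am_eq_phi]) ε,
          ← orth_scale r hrpos v0 ε] at h1
    choose v hv1 hv2 using hex
    -- each normalized hyperplane passes through each cube center
    have hcenter : ∀ n i t, phi (v n i) (cpt n t) = 0 := by
      intro n i t
      have hcube : ∀ ε, (cubeM (cpt n t)) (orth (v n) ε)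
          = (cubeM (cpt n t)) Set.univ / 2 ^ h := by
        intro ε
        have h1 := hv2 n (Fin.natAdd m t) ε
        simpa only [hFdef, Fin.append_right] using h1
      haveI : IsFiniteMeasure (cubeM (cpt n t)) := (isMass_cubeM (cpt n t)).1
      have hnull : ∀ i', (cubeM (cpt n t)) {x | phi (v n i') x = 0} = 0 :=
        fun i' => mass_phi_null _ (isMass_cubeM _) _ (hv1 n i').1
      exact cube_center (cpt n t) (v n i) (hv1 n i).1
        (halfspace_half (cubeM (cpt n t)) (v n) hnull hcube i)
    have hcoord : ∀ n i t, (v n i).1 (Fin.natAdd d t) * n + (v n i).2 = 0 := by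
      intro n i t
      have h1 := hcenter n i t
      rwa [hcpt, phi_single] at h1
    -- compactness: extract a convergent subsequence
    set S : Set (Fin h → ((Fin (d + k) → ℝ) × ℝ)) := {V | ∀ i, ‖V i‖ = 1} with hSdef
    have hScompact : IsCompact S := by
      refine Metric.isCompact_of_isClosed_isBounded ?_ ?_
      · have hS2 : S = ⋂ i, (fun V : Fin h → ((Fin (d + k) → ℝ) × ℝ) => ‖V i‖) ⁻¹' {1} := by
          ext V
          simp [hSdef, Set.mem_iInter]
        rw [hS2]
        exact isClosed_iInter fun i =>
          isClosed_singleton.preimage (continuous_norm.comp (continuous_apply i))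
      · refine Metric.isBounded_closedBall (x := 0) (r := 1) |>.subset ?_
        intro V hV
        rw [Metric.mem_closedBall, dist_zero_right,
          pi_norm_le_iff_of_nonneg zero_le_one]
        exact fun i => le_of_eq (hV i)
    have hvS : ∀ n, v n ∈ S := fun n i => (hv1 n i).2
    obtain ⟨w, hwS, ψ, hψ, hconv⟩ := hScompact.tendsto_subseq hvS
    have hconv_i : ∀ i, Filter.Tendsto (fun n => v (ψ n) i) Filter.atTop (nhds (w i)) :=
      fun i => ((continuous_apply i).tendsto w).comp hconv
    -- the limit functionals are vertical
    have hvert : ∀ i t, (w i).1 (Fin.natAdd d t) = 0 := by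
      intro i t
      have h1 : Filter.Tendsto (fun n => (v (ψ n) i).1 (Fin.natAdd d t)) Filter.atTop
          (nhds ((w i).1 (Fin.natAdd d t))) :=
        (((continuous_apply (Fin.natAdd d t)).comp continuous_fst).tendsto (w i)).comp
          (hconv_i i)
      have h2 : Filter.Tendsto (fun n => (v (ψ n) i).1 (Fin.natAdd d t)) Filter.atTop
          (nhds 0) := by
        have hψn : Filter.Tendsto (fun n => ((ψ n : ℕ) : ℝ)) Filter.atTop Filter.atTop :=
          tendsto_natCast_atTop_atTop.comp hψ.tendsto_atTop
        refine squeeze_zero_norm' ?_ hψn.inv_tendsto_atTop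
        filter_upwards [Filter.eventually_ge_atTop 1] with n hn
        have hψge : (1:ℕ) ≤ ψ n := le_trans hn hψ.le_apply
        have hψpos : (0:ℝ) < (ψ n : ℝ) := by exact_mod_cast hψge
        have heq := hcoord (ψ n) i t
        have habs : |(v (ψ n) i).1 (Fin.natAdd d t)| * (ψ n : ℝ)
            = |(v (ψ n) i).2| := by
          rw [← abs_of_pos hψpos, ← abs_mul,
            show (v (ψ n) i).1 (Fin.natAdd d t) * (ψ n : ℝ) = -(v (ψ n) i).2 by linarith,
            abs_neg]
        have hsnd : |(v (ψ n) i).2| ≤ 1 := by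
          have h3 := norm_snd_le (v (ψ n) i)
          rw [(hv1 (ψ n) i).2] at h3
          exact h3
        show |(v (ψ n) i).1 (Fin.natAdd d t)| ≤ ((ψ n : ℝ))⁻¹
        rw [← one_div, le_div_iff₀ hψpos, habs]
        exact hsnd
      exact tendsto_nhds_unique h1 h2
    -- limit boundaries are null for the thickened masses
    have hnullw : ∀ j i, (thick (k := k) (μ j)) {x | phi (w i) x = 0} = 0 := by
      intro j i
      by_cases hwi : (w i).1 = 0
      · have hn1 : ‖w i‖ = 1 := hwS i
        rw [Prod.norm_def, hwi, norm_zero, max_eq_right (norm_nonneg _)] at hn1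
        have hc : (w i).2 ≠ 0 := by
          intro hc0
          rw [hc0, norm_zero] at hn1
          norm_num at hn1
        have hphiconst : ∀ x : Fin (d + k) → ℝ, phi (w i) x = (w i).2 := by
          intro x
          unfold phi
          rw [Finset.sum_eq_zero fun idx _ => by rw [hwi]; simp, zero_add]
        have hset : {x : Fin (d + k) → ℝ | phi (w i) x = 0} = ∅ := by
          ext x
          simp [hphiconst x, hc]
        rw [hset]
        exact measure_empty
      · exact mass_phi_null _ (isMass_thick (μ j) (hμ j)) _ hwi
    -- limit of the cut equalities
    have hlim : ∀ j ε, (thick (k := k) (μ j)) (orth w ε)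
        = (thick (k := k) (μ j)) Set.univ / 2 ^ h := by
      intro j ε
      haveI : IsFiniteMeasure (thick (k := k) (μ j)) := (isMass_thick (μ j) (hμ j)).1
      have ht := tendsto_orth (thick (k := k) (μ j)) (fun n => v (ψ n)) w hconv_i
        (hnullw j) ε
      have hconst : ∀ n, (thick (k := k) (μ j)) (orth (v (ψ n)) ε)
          = (thick (k := k) (μ j)) Set.univ / 2 ^ h := by
        intro n
        have h1 := hv2 (ψ n) (Fin.castAdd k j) ε
        simpa only [hFdef, Fin.append_left] using h1
      exact (tendsto_nhds_unique tendsto_const_nhds (ht.congr hconst)).symm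
    by_cases hW : ∀ i, (w i).1 ≠ 0
    · -- the traces give the required equipartition
      refine ⟨fun i => am (trace (w i)), fun i => ?_, fun j => ?_⟩
      · rw [am_linear]
        intro h0
        have htr := lf_eq_zero_iff.mp h0
        apply hW i
        funext idx
        refine Fin.addCases (fun i0 => ?_) (fun t => ?_) idx
        · exact congrFun htr i0
        · exact hvert i t
      · intro ε
        rw [orth_congr _ (fun i => trace (w i)) (fun i x => am_eq_phi _ _) ε]
        have h1 := hlim j ε
        rwa [thick_orth (μ j) w hvert ε, thick_univ] at h1
    · push_neg at hW
      obtain ⟨i0, hi0⟩ := hW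
      exfalso
      have hn1 : ‖w i0‖ = 1 := hwS i0
      rw [Prod.norm_def, hi0, norm_zero, max_eq_right (norm_nonneg _)] at hn1
      have hc : (w i0).2 ≠ 0 := by
        intro hc0
        rw [hc0, norm_zero] at hn1
        norm_num at hn1
      have hphiconst : ∀ x : Fin (d + k) → ℝ, phi (w i0) x = (w i0).2 := by
        intro x
        unfold phi
        rw [Finset.sum_eq_zero fun idx _ => by rw [hi0]; simp, zero_add]
      obtain ⟨ε0, hempty⟩ : ∃ ε0 : Fin h → Bool, orth w ε0 = ∅ := by
        rcases lt_or_gt_of_ne hc with hneg | hpos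
        · refine ⟨fun _ => true, Set.eq_empty_iff_forall_notMem.mpr fun x hx => ?_⟩
          have h2 := hx i0
          simp only [if_true] at h2
          rw [hphiconst] at h2
          linarith
        · refine ⟨fun _ => false, Set.eq_empty_iff_forall_notMem.mpr fun x hx => ?_⟩
          have h2 := hx i0
          simp only [Bool.false_eq_true, if_false] at h2
          rw [hphiconst] at h2
          linarith
      have h0 := hlim j0 ε0
      rw [hempty, measure_empty] at h0
      rcases ENNReal.div_eq_zero_iff.mp h0.symm with h1 | h1
      · rw [thick_univ] at h1
        exact hj0 h1
      · exact absurd h1 (by simp)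

end Equi

/-- Assuming Ramos' bound `(15·2^x, 5, 2^{x+1})` is admissible for
all `x ≥ 0`, every `m = 2^q + r ≥ 2` with `0 < r ≤ 2^q` satisfies that
`(14·2^q + r, 5, m)` is admissible. -/
theorem admissible_five_hyperplanes
    (ramos : ∀ x : ℕ, Admissible (15 * 2 ^ x) 5 (2 ^ (x + 1)))
    (m q r : ℕ) (hm : 2 ≤ m) (hr : 0 < r) (hrq : r ≤ 2 ^ q)
    (hmqr : m = 2 ^ q + r) :
    Admissible (14 * 2 ^ q + r) 5 m := by
  have hk : m + (2 ^ q - r) = 2 ^ (q + 1) := by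
    rw [pow_succ]
    omega
  have hdk : (14 * 2 ^ q + r) + (2 ^ q - r) = 15 * 2 ^ q := by omega
  have h0 : 0 < 14 * 2 ^ q + r := by omega
  have hadm : Admissible ((14 * 2 ^ q + r) + (2 ^ q - r)) 5 (m + (2 ^ q - r)) := by
    rw [hdk, hk]
    exact ramos q
  exact Equi.key_reduction h0 hadm
end
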